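/- arXiv:1811.05239 — 15 statements merged into one kernel-verified Lean document; each statement's English description precedes it below -/
import Mathlib

section
/- For integers 1 ≤ k < ℓ and real numbers μ_k, μ_{k+1}, ..., μ_ℓ such that μ_j ≠ μ_k for every j with k < j ≤ ℓ, it holds that ∑_{i=k+1}^{ℓ} ( ∏_{v=k}^{i−1} (μ_v − μ_ℓ) ) / ( ∏_{j=k+1}^{i} (μ_j − μ_k) ) = −1. -/
open Finset

/-- Telescoping: with `P m := ∏_{v=k+1}^{m} (μ v - c) / ∏_{j=k+1}^{m} (μ j - μ k)`, the `i`-th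
summand is `P i - P (i - 1)`, since `(μ i - c) / (μ i - μ k) - 1 = (μ k - c) / (μ i - μ k)`. -/
theorem sum_Icc_prod_sub_div_prod_sub {K : Type*} [Field K] (μ : ℕ → K) (c : K) {k m : ℕ}
    (hkm : k ≤ m) (hne : ∀ j, k < j → j ≤ m → μ j ≠ μ k) :
    ∑ i ∈ Icc (k + 1) m, (∏ v ∈ Icc k (i - 1), (μ v - c)) / ∏ j ∈ Icc (k + 1) i, (μ j - μ k) =
      (∏ v ∈ Icc (k + 1) m, (μ v - c)) / (∏ j ∈ Icc (k + 1) m, (μ j - μ k)) - 1 := by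
  induction m, hkm using Nat.le_induction with
  | base => simp
  | succ m hkm ih =>
    have hprod : ∏ j ∈ Icc (k + 1) m, (μ j - μ k) ≠ 0 :=
      prod_ne_zero_iff.mpr fun j hj ↦ by
        obtain ⟨hkj, hjm⟩ := mem_Icc.mp hj
        exact sub_ne_zero_of_ne (hne j hkj (by omega))
    have hlast : μ (m + 1) - μ k ≠ 0 := sub_ne_zero_of_ne (hne (m + 1) (by omega) le_rfl)
    rw [sum_Icc_succ_top (by omega), ih fun j hj hjm ↦ hne j hj (by omega),
      prod_Icc_succ_top (by omega), prod_Icc_succ_top (by omega), Nat.add_sub_cancel,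
      ← insert_Icc_add_one_left_eq_Icc hkm, prod_insert (by simp)]
    field_simp
    ring

theorem stmt0_general (k l : ℕ) (hkl : k < l) (μ : ℕ → ℝ)
    (hne : ∀ j, k < j → j ≤ l → μ j ≠ μ k) :
    ∑ i ∈ Finset.Icc (k + 1) l,
      (∏ v ∈ Finset.Icc k (i - 1), (μ v - μ l)) /
        (∏ j ∈ Finset.Icc (k + 1) i, (μ j - μ k)) = -1 := by
  rw [sum_Icc_prod_sub_div_prod_sub μ (μ l) hkl.le hne,
    prod_eq_zero (mem_Icc.mpr ⟨hkl, le_rfl⟩) (sub_self _), zero_div, zero_sub]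

/-- Lemma 1 of the paper: for integers `1 ≤ k < ℓ` and reals `μ` with `μ j ≠ μ k`
for `k < j ≤ ℓ`, the alternating product sum collapses to `-1`.
Products over empty index ranges equal `1`. -/
theorem stmt0 (k l : ℕ) (hk : 1 ≤ k) (hkl : k < l) (μ : ℕ → ℝ)
    (hne : ∀ j, k < j → j ≤ l → μ j ≠ μ k) :
    ∑ i ∈ Finset.Icc (k + 1) l,
      (∏ v ∈ Finset.Icc k (i - 1), (μ v - μ l)) /
        (∏ j ∈ Finset.Icc (k + 1) i, (μ j - μ k)) = -1 :=
  stmt0_general k l hkl μ hne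
end

section
/- For i = 1,...,n−1 one has 0 < p_i < 1, and for every real s ≥ 0, ∑_{k=1}^n p̃_k μ_k/(s+μ_k) = ∑_{i=1}^n (1−p_i) (∏_{j=1}^{i−1} p_j) ∏_{j=1}^{i} μ_j/(s+μ_j). That is, the hyperexponential distribution with parameters (p̃_k, μ_k) has the same Laplace–Stieltjes transform as the Coxian distribution with rates μ_i and continuation probabilities p_i. -/
/-!
Let `G k m = ∏_{j=1}^{m} (1 - μ_k/μ_j)` (`residual`), `R m = ∑_k p̃_k G k m` (`residualMass`) and
`F i = ∏_{j=1}^{i} μ_j/(s+μ_j)` (`phaseLST`). Since `G k m = 0` for `k ≤ m`, the definition of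
`p_i` reads `p_i = R i / R (i-1)`, so the products of the `p_j` telescope and the Coxian weight of
stage `i` is `(1 - p_i) ∏_{j<i} p_j = R (i-1) - R i`. For decreasing positive rates `G k m > 0`
when `m < k`, which gives `R n = 0 < R m` and `R (m+1) < R m` for `m < n`, hence `0 < p_i < 1`.
For the transform, `(G k (i-1) - G k i) F i = μ_k/(s+μ_k) (G k (i-1) F (i-1) - G k i F i)`
telescopes in `i` to `μ_k/(s+μ_k)` because `G k n = 0`.
-/

open Finset

noncomputable section

namespace HyperexponentialCoxian

section Field

variable {K : Type*} [Field K]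

def residual (μ : ℕ → K) (k m : ℕ) : K := ∏ j ∈ Icc 1 m, (1 - μ k / μ j)

def residualMass (μ pt : ℕ → K) (n m : ℕ) : K := ∑ k ∈ Icc 1 n, pt k * residual μ k m

/-- The Laplace–Stieltjes transform at `s` of the sum of the first `i` exponential phases. -/
def phaseLST (μ : ℕ → K) (s : K) (i : ℕ) : K := ∏ j ∈ Icc 1 i, μ j / (s + μ j)

@[simp]
lemma residual_zero (μ : ℕ → K) (k : ℕ) : residual μ k 0 = 1 := by
  simp [residual]

lemma residual_succ (μ : ℕ → K) (k m : ℕ) :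
    residual μ k (m + 1) = residual μ k m * (1 - μ k / μ (m + 1)) :=
  prod_Icc_succ_top (by omega) _

lemma residual_eq_zero {μ : ℕ → K} {k m : ℕ} (hk : 1 ≤ k) (hkm : k ≤ m) (hμk : μ k ≠ 0) :
    residual μ k m = 0 :=
  prod_eq_zero (mem_Icc.2 ⟨hk, hkm⟩) (by rw [div_self hμk, sub_self])

@[simp]
lemma phaseLST_zero (μ : ℕ → K) (s : K) : phaseLST μ s 0 = 1 := by
  simp [phaseLST]

lemma phaseLST_succ (μ : ℕ → K) (s : K) (i : ℕ) :
    phaseLST μ s (i + 1) = phaseLST μ s i * (μ (i + 1) / (s + μ (i + 1))) :=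
  prod_Icc_succ_top (by omega) _

lemma residual_sub_succ_mul_phaseLST_succ {μ : ℕ → K} {s : K} {k m : ℕ}
    (hμ : μ (m + 1) ≠ 0) (hs : s + μ (m + 1) ≠ 0) (hsk : s + μ k ≠ 0) :
    (residual μ k m - residual μ k (m + 1)) * phaseLST μ s (m + 1) =
      μ k / (s + μ k) *
        (residual μ k m * phaseLST μ s m - residual μ k (m + 1) * phaseLST μ s (m + 1)) := by
  rw [residual_succ, phaseLST_succ]
  field_simp
  ring

lemma sum_residual_sub_mul_phaseLST {μ : ℕ → K} {s : K} {k : ℕ} (hsk : s + μ k ≠ 0) :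
    ∀ {m : ℕ}, (∀ j ∈ Icc 1 m, μ j ≠ 0) → (∀ j ∈ Icc 1 m, s + μ j ≠ 0) →
      ∑ i ∈ Icc 1 m, (residual μ k (i - 1) - residual μ k i) * phaseLST μ s i =
        μ k / (s + μ k) * (1 - residual μ k m * phaseLST μ s m)
  | 0, _, _ => by simp
  | m + 1, hμ, hs => by
    have hmem : m + 1 ∈ Icc 1 (m + 1) := mem_Icc.2 ⟨by omega, le_rfl⟩
    have hsub : Icc 1 m ⊆ Icc 1 (m + 1) := Icc_subset_Icc le_rfl (by omega)
    rw [sum_Icc_succ_top (by omega), Nat.add_sub_cancel,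
      sum_residual_sub_mul_phaseLST hsk (fun j hj => hμ j (hsub hj)) (fun j hj => hs j (hsub hj)),
      residual_sub_succ_mul_phaseLST_succ (hμ _ hmem) (hs _ hmem) hsk]
    ring

@[simp]
lemma residualMass_zero (μ pt : ℕ → K) (n : ℕ) : residualMass μ pt n 0 = ∑ k ∈ Icc 1 n, pt k := by
  simp [residualMass]

variable {μ pt : ℕ → K} {n : ℕ}

lemma residualMass_self (hμ : ∀ k ∈ Icc 1 n, μ k ≠ 0) : residualMass μ pt n n = 0 :=
  sum_eq_zero fun k hk => by
    obtain ⟨hk1, hkn⟩ := mem_Icc.1 hk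
    rw [residual_eq_zero hk1 hkn (hμ k hk), mul_zero]

lemma residualMass_eq_sum_Icc_succ (hμ : ∀ k ∈ Icc 1 n, μ k ≠ 0) (m : ℕ) :
    residualMass μ pt n m = ∑ k ∈ Icc (m + 1) n, pt k * residual μ k m := by
  refine (sum_subset (Icc_subset_Icc (by omega) le_rfl) fun k hk hk' => ?_).symm
  obtain ⟨hk1, hkn⟩ := mem_Icc.1 hk
  rw [residual_eq_zero hk1 (by simp only [mem_Icc] at hk'; omega) (hμ k hk), mul_zero]

lemma residualMass_sub_succ (m : ℕ) :
    residualMass μ pt n m - residualMass μ pt n (m + 1) =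
      ∑ k ∈ Icc 1 n, pt k * residual μ k m * (μ k / μ (m + 1)) := by
  simp only [residualMass, ← sum_sub_distrib, residual_succ]
  exact sum_congr rfl fun _ _ => by ring

lemma sum_residualMass_sub_mul_phaseLST {s : K} (hμ : ∀ j ∈ Icc 1 n, μ j ≠ 0)
    (hs : ∀ j ∈ Icc 1 n, s + μ j ≠ 0) :
    ∑ i ∈ Icc 1 n, (residualMass μ pt n (i - 1) - residualMass μ pt n i) * phaseLST μ s i =
      ∑ k ∈ Icc 1 n, pt k * (μ k / (s + μ k)) := by
  calc _ = ∑ i ∈ Icc 1 n, ∑ k ∈ Icc 1 n,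
          pt k * ((residual μ k (i - 1) - residual μ k i) * phaseLST μ s i) := by
        simp only [residualMass, ← sum_sub_distrib, sum_mul]
        exact sum_congr rfl fun _ _ => sum_congr rfl fun _ _ => by ring
    _ = ∑ k ∈ Icc 1 n, pt k *
          ∑ i ∈ Icc 1 n, (residual μ k (i - 1) - residual μ k i) * phaseLST μ s i := by
        rw [sum_comm]
        simp only [mul_sum]
    _ = _ := sum_congr rfl fun k hk => by
        obtain ⟨hk1, hkn⟩ := mem_Icc.1 hk
        rw [sum_residual_sub_mul_phaseLST (hs k hk) hμ hs, residual_eq_zero hk1 hkn (hμ k hk)]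
        ring

end Field

section Telescoping

variable {K : Type*} [Field K] {R p : ℕ → K}

lemma prod_Icc_eq_of_eq_div (hR0 : R 0 = 1) :
    ∀ {m : ℕ}, (∀ j < m, R j ≠ 0) → (∀ i ∈ Icc 1 m, p i = R i / R (i - 1)) →
      ∏ i ∈ Icc 1 m, p i = R m
  | 0, _, _ => by simp [hR0]
  | m + 1, hR, hp => by
    rw [prod_Icc_succ_top (by omega),
      prod_Icc_eq_of_eq_div hR0 (fun j hj => hR j (by omega))
        (fun i hi => hp i (Icc_subset_Icc le_rfl (by omega) hi)),
      hp (m + 1) (mem_Icc.2 ⟨by omega, le_rfl⟩), Nat.add_sub_cancel,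
      mul_div_cancel₀ _ (hR m (by omega))]

lemma one_sub_mul_prod_eq_sub {n : ℕ} (hR0 : R 0 = 1) (hRn : R n = 0) (hR : ∀ j < n, R j ≠ 0)
    (hp : ∀ i ∈ Icc 1 (n - 1), p i = R i / R (i - 1)) (hpn : p n = 0) {i : ℕ}
    (hi : i ∈ Icc 1 n) :
    (1 - p i) * ∏ j ∈ Icc 1 (i - 1), p j = R (i - 1) - R i := by
  obtain ⟨hi1, hin⟩ := mem_Icc.1 hi
  rw [prod_Icc_eq_of_eq_div hR0 (fun j hj => hR j (by omega))
    (fun j hj => hp j (Icc_subset_Icc le_rfl (by omega) hj))]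
  rcases hin.lt_or_eq with hin | rfl
  · rw [hp i (mem_Icc.2 ⟨hi1, by omega⟩)]
    field_simp [hR (i - 1) (by omega)]
  · rw [hpn, hRn]
    ring

end Telescoping

section Real

variable {μ pt : ℕ → ℝ} {n : ℕ}

lemma pos_of_strictAntiOn (hμ : StrictAntiOn μ (Set.Icc 1 n)) (hμn : 0 < μ n) {j : ℕ}
    (hj : j ∈ Icc 1 n) : 0 < μ j := by
  obtain ⟨hj1, hjn⟩ := mem_Icc.1 hj
  rcases hjn.lt_or_eq with hjn | rfl
  · exact hμn.trans (hμ ⟨hj1, hjn.le⟩ ⟨hj1.trans hjn.le, le_rfl⟩ hjn)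
  · exact hμn

variable (hμ : StrictAntiOn μ (Set.Icc 1 n)) (hμn : 0 < μ n)
include hμ hμn

lemma residual_pos {k m : ℕ} (hmk : m < k) (hkn : k ≤ n) : 0 < residual μ k m :=
  prod_pos fun j hj => by
    obtain ⟨hj1, hjm⟩ := mem_Icc.1 hj
    have hμj := pos_of_strictAntiOn hμ hμn (mem_Icc.2 ⟨hj1, by omega⟩)
    have := (div_lt_one hμj).2 (hμ ⟨hj1, by omega⟩ ⟨by omega, hkn⟩ (by omega))
    linarith

lemma residual_nonneg {k m : ℕ} (hk : k ∈ Icc 1 n) : 0 ≤ residual μ k m := by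
  obtain ⟨hk1, hkn⟩ := mem_Icc.1 hk
  rcases le_or_gt k m with hkm | hmk
  · exact (residual_eq_zero hk1 hkm (pos_of_strictAntiOn hμ hμn hk).ne').ge
  · exact (residual_pos hμ hμn hmk hkn).le

variable (hpt : ∀ k ∈ Icc 1 n, 0 < pt k)
include hpt

lemma residualMass_pos {m : ℕ} (hm : m < n) : 0 < residualMass μ pt n m :=
  sum_pos' (fun k hk => mul_nonneg (hpt k hk).le (residual_nonneg hμ hμn hk))
    ⟨n, mem_Icc.2 ⟨by omega, le_rfl⟩,
      mul_pos (hpt n (mem_Icc.2 ⟨by omega, le_rfl⟩)) (residual_pos hμ hμn hm le_rfl)⟩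

lemma residualMass_succ_lt {m : ℕ} (hm : m + 1 ≤ n) :
    residualMass μ pt n (m + 1) < residualMass μ pt n m := by
  have hnmem : n ∈ Icc 1 n := mem_Icc.2 ⟨by omega, le_rfl⟩
  have hμm := pos_of_strictAntiOn hμ hμn (mem_Icc.2 ⟨by omega, hm⟩)
  rw [← sub_pos, residualMass_sub_succ]
  refine sum_pos' (fun k hk => ?_) ⟨n, hnmem, ?_⟩
  · have := div_pos (pos_of_strictAntiOn hμ hμn hk) hμm
    exact mul_nonneg (mul_nonneg (hpt k hk).le (residual_nonneg hμ hμn hk)) this.le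
  · exact mul_pos (mul_pos (hpt n hnmem) (residual_pos hμ hμn (by omega) le_rfl))
      (div_pos hμn hμm)

end Real

end HyperexponentialCoxian

end

open HyperexponentialCoxian in
theorem stmt1_general (n : ℕ) (μ pt p : ℕ → ℝ)
    (hμdec : ∀ i j, 1 ≤ i → i < j → j ≤ n → μ j < μ i)
    (hμpos : 0 < μ n)
    (hpt : ∀ k, 1 ≤ k → k ≤ n → 0 < pt k)
    (hptsum : ∑ k ∈ Finset.Icc 1 n, pt k = 1)
    (hp : ∀ i, 1 ≤ i → i ≤ n - 1 →
      p i = (∑ k ∈ Finset.Icc (i + 1) n, pt k * ∏ j ∈ Finset.Icc 1 i, (1 - μ k / μ j)) /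
            (∑ k ∈ Finset.Icc i n, pt k * ∏ j ∈ Finset.Icc 1 (i - 1), (1 - μ k / μ j)))
    (hpn : p n = 0) :
    (∀ i, 1 ≤ i → i ≤ n - 1 → 0 < p i ∧ p i < 1) ∧
    (∀ s : ℝ, 0 ≤ s →
      ∑ k ∈ Finset.Icc 1 n, pt k * (μ k / (s + μ k)) =
      ∑ i ∈ Finset.Icc 1 n,
        (1 - p i) * (∏ j ∈ Finset.Icc 1 (i - 1), p j) *
          ∏ j ∈ Finset.Icc 1 i, μ j / (s + μ j)) := by
  have hμ : StrictAntiOn μ (Set.Icc 1 n) := fun i hi j hj hij => hμdec i j hi.1 hij hj.2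
  have hμ0 : ∀ j ∈ Icc 1 n, μ j ≠ 0 := fun j hj => (pos_of_strictAntiOn hμ hμpos hj).ne'
  have hpt' : ∀ k ∈ Icc 1 n, 0 < pt k := fun k hk => hpt k (mem_Icc.1 hk).1 (mem_Icc.1 hk).2
  have hRpos : ∀ m < n, 0 < residualMass μ pt n m := fun m => residualMass_pos hμ hμpos hpt'
  have hpR : ∀ i ∈ Icc 1 (n - 1), p i = residualMass μ pt n i / residualMass μ pt n (i - 1) := by
    intro i hi
    obtain ⟨hi1, hin⟩ := mem_Icc.1 hi
    rw [hp i hi1 hin, residualMass_eq_sum_Icc_succ hμ0, residualMass_eq_sum_Icc_succ hμ0,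
      Nat.sub_add_cancel hi1]
    rfl
  refine ⟨fun i hi1 hin => ?_, fun s hs => ?_⟩
  · have hlt := residualMass_succ_lt hμ hμpos hpt' (m := i - 1) (by omega)
    rw [Nat.sub_add_cancel hi1] at hlt
    rw [hpR i (mem_Icc.2 ⟨hi1, hin⟩)]
    exact ⟨div_pos (hRpos i (by omega)) (hRpos _ (by omega)),
      (div_lt_one (hRpos _ (by omega))).2 hlt⟩
  · have hs0 : ∀ j ∈ Icc 1 n, s + μ j ≠ 0 := fun j hj =>
      (add_pos_of_nonneg_of_pos hs (pos_of_strictAntiOn hμ hμpos hj)).ne'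
    rw [← sum_residualMass_sub_mul_phaseLST hμ0 hs0]
    refine sum_congr rfl fun i hi => ?_
    rw [one_sub_mul_prod_eq_sub (by simpa using hptsum) (residualMass_self hμ0)
      (fun j hj => (hRpos j hj).ne') hpR hpn hi]
    rfl

/-- Proposition 1 of the paper (LST equality): the hyperexponential distribution with
parameters `(p̃ k, μ k)` has the same Laplace–Stieltjes transform as the Coxian
distribution with rates `μ i` and continuation probabilities `p i`, and the `p i`
are genuine probabilities in `(0,1)`. Products over empty ranges equal `1`. -/
theorem stmt1 (n : ℕ) (hn : 1 ≤ n) (μ pt p : ℕ → ℝ)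
    (hμdec : ∀ i j, 1 ≤ i → i < j → j ≤ n → μ j < μ i)
    (hμpos : 0 < μ n)
    (hpt : ∀ k, 1 ≤ k → k ≤ n → 0 < pt k)
    (hptsum : ∑ k ∈ Finset.Icc 1 n, pt k = 1)
    (hp : ∀ i, 1 ≤ i → i ≤ n - 1 →
      p i = (∑ k ∈ Finset.Icc (i + 1) n, pt k * ∏ j ∈ Finset.Icc 1 i, (1 - μ k / μ j)) /
            (∑ k ∈ Finset.Icc i n, pt k * ∏ j ∈ Finset.Icc 1 (i - 1), (1 - μ k / μ j)))
    (hpn : p n = 0) :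
    (∀ i, 1 ≤ i → i ≤ n - 1 → 0 < p i ∧ p i < 1) ∧
    (∀ s : ℝ, 0 ≤ s →
      ∑ k ∈ Finset.Icc 1 n, pt k * (μ k / (s + μ k)) =
      ∑ i ∈ Finset.Icc 1 n,
        (1 - p i) * (∏ j ∈ Finset.Icc 1 (i - 1), p j) *
          ∏ j ∈ Finset.Icc 1 i, μ j / (s + μ j)) :=
  stmt1_general n μ pt p hμdec hμpos hpt hptsum hp hpn
end

section
/- Define c_i := ∑_{ℓ=i}^n p̃_ℓ (μ_ℓ/μ_i) ∏_{v=1}^{i−1} (1 − μ_ℓ/μ_v) for i = 1,...,n. Then for every k ∈ {1,...,n}, ∑_{i=k}^n c_i ∏_{j=1, j≠k}^{i} μ_j/(μ_j − μ_k) = p̃_k. (The numbers c_i solve the linear system expressing the hyperexponential weights in terms of the Coxian phase-visit probabilities; indeed c_i = (1−p_i) ∏_{j=1}^{i−1} p_j.) -/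
/-!
Substituting the definition of `c` and exchanging the two sums reduces the claim to
`∑_{i=k}^{ℓ} (μ_ℓ/μ_i) ∏_{v<i} (1 - μ_ℓ/μ_v) ∏_{j≤i, j≠k} μ_j/(μ_j - μ_k) = [ℓ = k]`
for `k ≤ ℓ ≤ n`. With `μ_ℓ` replaced by a free variable `x`, the partial sums up to `m`
telescope to `(x/μ_k) ∏_{v≤m, v≠k} (μ_v - x)/(μ_v - μ_k)`; at `m = ℓ` and `x = μ_ℓ`
the factor `v = ℓ` vanishes unless `ℓ = k`.
-/

open Finset

lemma prod_one_sub_div_mul_prod_div_sub {s : Finset ℕ} {a : ℕ → ℝ} (x y : ℝ)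
    (ha : ∀ v ∈ s, a v ≠ 0) :
    (∏ v ∈ s, (1 - x / a v)) * ∏ v ∈ s, a v / (a v - y)
      = ∏ v ∈ s, (a v - x) / (a v - y) := by
  rw [← prod_mul_distrib]
  refine prod_congr rfl fun v hv => ?_
  have := ha v hv
  field_simp

section Telescoping

variable {μ : ℕ → ℝ} {k m : ℕ}

lemma sum_Icc_mul_prod_erase_div_sub (x : ℝ) (hk : 1 ≤ k) (hkm : k ≤ m)
    (hμ0 : ∀ v ∈ Icc 1 m, μ v ≠ 0) (hμinj : Set.InjOn μ (Icc 1 m)) :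
    ∑ i ∈ Icc k m, (x / μ i) * (∏ v ∈ Icc 1 (i - 1), (1 - x / μ v)) *
        ∏ j ∈ (Icc 1 i).erase k, μ j / (μ j - μ k)
      = (x / μ k) * ∏ v ∈ (Icc 1 m).erase k, (μ v - x) / (μ v - μ k) := by
  induction m, hkm using Nat.le_induction with
  | base =>
    have hIcc : (Icc 1 k).erase k = Icc 1 (k - 1) := by
      ext v; simp only [mem_erase, mem_Icc]; omega
    rw [Icc_self, sum_singleton, hIcc, mul_assoc, prod_one_sub_div_mul_prod_div_sub x (μ k)
      fun v hv => hμ0 v (by simp only [mem_Icc] at hv ⊢; omega)]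
  | succ m hkm ih =>
    have hsub : Icc 1 m ⊆ Icc 1 (m + 1) := Icc_subset_Icc_right m.le_succ
    have hkmem : k ∈ Icc 1 m := mem_Icc.2 ⟨hk, hkm⟩
    have hm1mem : m + 1 ∈ Icc 1 (m + 1) := mem_Icc.2 ⟨by omega, le_rfl⟩
    have hk0 : μ k ≠ 0 := hμ0 k (hsub hkmem)
    have hm0 : μ (m + 1) ≠ 0 := hμ0 (m + 1) hm1mem
    have hmk : μ (m + 1) - μ k ≠ 0 :=
      sub_ne_zero.2 (hμinj.ne (mem_coe.2 hm1mem) (mem_coe.2 (hsub hkmem)) (by omega))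
    have hinsert : (Icc 1 (m + 1)).erase k = insert (m + 1) ((Icc 1 m).erase k) := by
      ext v; simp only [mem_erase, mem_Icc, mem_insert]; omega
    have hnotin : m + 1 ∉ (Icc 1 m).erase k := by simp
    have hQ := prod_one_sub_div_mul_prod_div_sub (s := (Icc 1 m).erase k) x (μ k)
      fun v hv => hμ0 v (hsub (mem_of_mem_erase hv))
    rw [sum_Icc_succ_top (by omega),
      ih (fun v hv => hμ0 v (hsub hv)) (hμinj.mono (coe_subset.2 hsub)), hinsert,
      prod_insert hnotin, prod_insert hnotin, Nat.add_sub_cancel, ← mul_prod_erase _ _ hkmem,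
      ← hQ]
    field_simp
    ring

lemma sum_Icc_mul_prod_erase_div_sub_self {l : ℕ} (hk : 1 ≤ k) (hkl : k ≤ l)
    (hμ0 : ∀ v ∈ Icc 1 l, μ v ≠ 0) (hμinj : Set.InjOn μ (Icc 1 l)) :
    ∑ i ∈ Icc k l, (μ l / μ i) * (∏ v ∈ Icc 1 (i - 1), (1 - μ l / μ v)) *
        ∏ j ∈ (Icc 1 i).erase k, μ j / (μ j - μ k)
      = if l = k then 1 else 0 := by
  rw [sum_Icc_mul_prod_erase_div_sub (μ l) hk hkl hμ0 hμinj]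
  split_ifs with hlk
  · subst hlk
    rw [div_self (hμ0 l (mem_Icc.2 ⟨hk, le_rfl⟩)), one_mul]
    refine prod_eq_one fun v hv => div_self (sub_ne_zero.2 ?_)
    obtain ⟨hvl, hv⟩ := mem_erase.1 hv
    exact hμinj.ne (mem_coe.2 hv) (mem_coe.2 (mem_Icc.2 ⟨hk, le_rfl⟩)) hvl
  · exact mul_eq_zero_of_right _ <| prod_eq_zero (i := l)
      (by simp only [mem_erase, mem_Icc]; omega) (by rw [sub_self, zero_div])

end Telescoping

theorem stmt2_general (n : ℕ) (μ pt c : ℕ → ℝ)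
    (hμdec : ∀ i j, 1 ≤ i → i < j → j ≤ n → μ j < μ i)
    (hμpos : 0 < μ n)
    (hc : ∀ i, 1 ≤ i → i ≤ n →
      c i = ∑ l ∈ Finset.Icc i n,
        pt l * (μ l / μ i) * ∏ v ∈ Finset.Icc 1 (i - 1), (1 - μ l / μ v)) :
    ∀ k, 1 ≤ k → k ≤ n →
      ∑ i ∈ Finset.Icc k n,
        c i * ∏ j ∈ (Finset.Icc 1 i).erase k, (μ j / (μ j - μ k)) = pt k := by
  intro k hk hkn
  have hμanti : StrictAntiOn μ (Icc 1 n) := fun i hi j hj hij =>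
    hμdec i j (mem_Icc.1 hi).1 hij (mem_Icc.1 hj).2
  have hμ0 : ∀ l ≤ n, ∀ v ∈ Icc 1 l, μ v ≠ 0 := fun l hl v hv =>
    have hv' : v ∈ Icc 1 n := Icc_subset_Icc_right hl hv
    have hn : n ∈ Icc 1 n := mem_Icc.2 ⟨(mem_Icc.1 hv').1.trans (mem_Icc.1 hv').2, le_rfl⟩
    (hμpos.trans_le (hμanti.antitoneOn hv' hn (mem_Icc.1 hv').2)).ne'
  have hμinj : ∀ l ≤ n, Set.InjOn μ (Icc 1 l) := fun l hl =>
    hμanti.injOn.mono (coe_subset.2 (Icc_subset_Icc_right hl))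
  calc ∑ i ∈ Icc k n, c i * ∏ j ∈ (Icc 1 i).erase k, μ j / (μ j - μ k)
      = ∑ i ∈ Icc k n, ∑ l ∈ Icc i n, pt l * ((μ l / μ i) *
          (∏ v ∈ Icc 1 (i - 1), (1 - μ l / μ v)) *
          ∏ j ∈ (Icc 1 i).erase k, μ j / (μ j - μ k)) := sum_congr rfl fun i hi => by
        rw [hc i (by linarith [(mem_Icc.1 hi).1]) (mem_Icc.1 hi).2, sum_mul]
        exact sum_congr rfl fun l _ => by ring
    _ = ∑ l ∈ Icc k n, pt l * ∑ i ∈ Icc k l, (μ l / μ i) *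
          (∏ v ∈ Icc 1 (i - 1), (1 - μ l / μ v)) *
          ∏ j ∈ (Icc 1 i).erase k, μ j / (μ j - μ k) := by
        simp_rw [mul_sum]
        exact sum_comm' fun i l => by simp only [mem_Icc]; omega
    _ = ∑ l ∈ Icc k n, pt l * if l = k then 1 else 0 := sum_congr rfl fun l hl => by
        obtain ⟨hkl, hln⟩ := mem_Icc.1 hl
        rw [sum_Icc_mul_prod_erase_div_sub_self hk hkl (hμ0 l hln) (hμinj l hln)]
    _ = pt k := by simp [hkn]

/-- The numbers `c i = ∑_{ℓ=i}^n p̃ ℓ (μ ℓ/μ i) ∏_{v=1}^{i−1} (1 − μ ℓ/μ v)` solve the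
linear system expressing the hyperexponential weights in terms of the Coxian
phase-visit probabilities. Products over empty ranges equal `1`. -/
theorem stmt2 (n : ℕ) (hn : 1 ≤ n) (μ pt c : ℕ → ℝ)
    (hμdec : ∀ i j, 1 ≤ i → i < j → j ≤ n → μ j < μ i)
    (hμpos : 0 < μ n)
    (hpt : ∀ k, 1 ≤ k → k ≤ n → 0 < pt k)
    (hptsum : ∑ k ∈ Finset.Icc 1 n, pt k = 1)
    (hc : ∀ i, 1 ≤ i → i ≤ n →
      c i = ∑ l ∈ Finset.Icc i n,
        pt l * (μ l / μ i) * ∏ v ∈ Finset.Icc 1 (i - 1), (1 - μ l / μ v)) :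
    ∀ k, 1 ≤ k → k ≤ n →
      ∑ i ∈ Finset.Icc k n,
        c i * ∏ j ∈ (Finset.Icc 1 i).erase k, (μ j / (μ j - μ k)) = pt k :=
  stmt2_general n μ pt c hμdec hμpos hc
end

section
/- For every i = 1,...,n, (1 − p_i) μ_i = ( ∑_{k=i}^n p̃_k μ_k ∏_{j=1}^{i−1} (1 − μ_k/μ_j) ) / ( ∑_{k=i}^n p̃_k ∏_{j=1}^{i−1} (1 − μ_k/μ_j) ), and the denominator is strictly positive. -/
open Finset

/-!
Write `w k = p̃_k ∏_{j<i} (1 - μ_k/μ_j)`, so the denominator is `D = ∑_{k ≥ i} w k`, positive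
because `μ_k < μ_j` for `j < k`. Since `∏_{j ≤ i} = w k (1 - μ_k/μ_i)` and the factor vanishes at
`k = i`, the numerator of `p_i` is `∑_{k ≥ i} w k (1 - μ_k/μ_i) = D - (∑_{k ≥ i} w k μ_k)/μ_i`,
whence `(1 - p_i) μ_i = (∑_{k ≥ i} w k μ_k)/D`. For `i = n` the same formula holds with the empty
numerator `0 = p_n`.
-/

lemma prod_one_sub_div_pos {ι : Type*} {s : Finset ι} {a : ℝ} {b : ι → ℝ}
    (h : ∀ j ∈ s, 0 < b j ∧ a < b j) : 0 < ∏ j ∈ s, (1 - a / b j) :=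
  prod_pos fun j hj => sub_pos.2 ((div_lt_one (h j hj).1).2 (h j hj).2)

lemma prod_Icc_one_eq_prod_pred_mul {M : Type*} [CommMonoid M] (f : ℕ → M) {i : ℕ} (hi : 1 ≤ i) :
    ∏ j ∈ Icc 1 i, f j = (∏ j ∈ Icc 1 (i - 1), f j) * f i := by
  obtain ⟨m, rfl⟩ := Nat.exists_eq_add_of_le' hi
  rw [prod_Icc_succ_top (by omega), Nat.add_sub_cancel]

lemma sum_Icc_succ_mul_one_sub_div {w μ : ℕ → ℝ} {i n : ℕ} (hin : i ≤ n) (hμi : μ i ≠ 0) :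
    ∑ k ∈ Icc (i + 1) n, w k * (1 - μ k / μ i) =
      ∑ k ∈ Icc i n, w k - (∑ k ∈ Icc i n, w k * μ k) / μ i := by
  rw [sum_div, ← sum_sub_distrib, ← insert_Icc_add_one_left_eq_Icc hin, sum_insert (by simp),
    mul_div_assoc, div_self hμi, mul_one, sub_self, zero_add]
  exact sum_congr rfl fun k _ => by ring

theorem stmt3_general (n : ℕ) (μ pt p : ℕ → ℝ)
    (hμdec : ∀ i j, 1 ≤ i → i < j → j ≤ n → μ j < μ i)
    (hμpos : 0 < μ n)
    (hpt : ∀ k, 1 ≤ k → k ≤ n → 0 < pt k)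
    (hp : ∀ i, 1 ≤ i → i ≤ n - 1 →
      p i = (∑ k ∈ Finset.Icc (i + 1) n, pt k * ∏ j ∈ Finset.Icc 1 i, (1 - μ k / μ j)) /
            (∑ k ∈ Finset.Icc i n, pt k * ∏ j ∈ Finset.Icc 1 (i - 1), (1 - μ k / μ j)))
    (hpn : p n = 0) :
    ∀ i, 1 ≤ i → i ≤ n →
      0 < ∑ k ∈ Finset.Icc i n, pt k * ∏ j ∈ Finset.Icc 1 (i - 1), (1 - μ k / μ j) ∧
      (1 - p i) * μ i =
        (∑ k ∈ Finset.Icc i n, pt k * μ k * ∏ j ∈ Finset.Icc 1 (i - 1), (1 - μ k / μ j)) /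
        (∑ k ∈ Finset.Icc i n, pt k * ∏ j ∈ Finset.Icc 1 (i - 1), (1 - μ k / μ j)) := by
  intro i hi hin
  have hμ : ∀ k, 1 ≤ k → k ≤ n → 0 < μ k := fun k hk hkn =>
    hkn.eq_or_lt.elim (fun h => h ▸ hμpos) fun h => hμpos.trans (hμdec k n hk h le_rfl)
  set w : ℕ → ℝ := fun k => pt k * ∏ j ∈ Icc 1 (i - 1), (1 - μ k / μ j)
  have hw : ∀ k ∈ Icc i n, 0 < w k := fun k hk => by
    obtain ⟨hik, hkn⟩ := mem_Icc.1 hk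
    refine mul_pos (hpt k (by omega) hkn) (prod_one_sub_div_pos fun j hj => ?_)
    obtain ⟨hj1, hji⟩ := mem_Icc.1 hj
    exact ⟨hμ j hj1 (by omega), hμdec j k hj1 (by omega) hkn⟩
  have hD : 0 < ∑ k ∈ Icc i n, w k := sum_pos hw ⟨i, mem_Icc.2 ⟨le_rfl, hin⟩⟩
  have hnum : ∑ k ∈ Icc (i + 1) n, pt k * ∏ j ∈ Icc 1 i, (1 - μ k / μ j) =
      ∑ k ∈ Icc (i + 1) n, w k * (1 - μ k / μ i) :=
    sum_congr rfl fun k _ => by rw [prod_Icc_one_eq_prod_pred_mul _ hi, mul_assoc]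
  have hpi : p i = (∑ k ∈ Icc (i + 1) n, w k * (1 - μ k / μ i)) / ∑ k ∈ Icc i n, w k := by
    rcases hin.lt_or_eq with h | rfl
    · rw [hp i hi (by omega), hnum]
    · simp [hpn]
  have hM : ∑ k ∈ Icc i n, pt k * μ k * ∏ j ∈ Icc 1 (i - 1), (1 - μ k / μ j) =
      ∑ k ∈ Icc i n, w k * μ k :=
    sum_congr rfl fun k _ => mul_right_comm _ _ _
  refine ⟨hD, ?_⟩
  have hμi : μ i ≠ 0 := (hμ i hi hin).ne'
  rw [hpi, hM, sum_Icc_succ_mul_one_sub_div hin hμi]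
  field_simp
  ring

/-- Explicit expression for `(1 − p i) μ i` in the Coxian representation of a
hyperexponential distribution, together with positivity of the denominator.
Products over empty ranges equal `1`. -/
theorem stmt3 (n : ℕ) (hn : 1 ≤ n) (μ pt p : ℕ → ℝ)
    (hμdec : ∀ i j, 1 ≤ i → i < j → j ≤ n → μ j < μ i)
    (hμpos : 0 < μ n)
    (hpt : ∀ k, 1 ≤ k → k ≤ n → 0 < pt k)
    (hptsum : ∑ k ∈ Finset.Icc 1 n, pt k = 1)
    (hp : ∀ i, 1 ≤ i → i ≤ n - 1 →
      p i = (∑ k ∈ Finset.Icc (i + 1) n, pt k * ∏ j ∈ Finset.Icc 1 i, (1 - μ k / μ j)) /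
            (∑ k ∈ Finset.Icc i n, pt k * ∏ j ∈ Finset.Icc 1 (i - 1), (1 - μ k / μ j)))
    (hpn : p n = 0) :
    ∀ i, 1 ≤ i → i ≤ n →
      0 < ∑ k ∈ Finset.Icc i n, pt k * ∏ j ∈ Finset.Icc 1 (i - 1), (1 - μ k / μ j) ∧
      (1 - p i) * μ i =
        (∑ k ∈ Finset.Icc i n, pt k * μ k * ∏ j ∈ Finset.Icc 1 (i - 1), (1 - μ k / μ j)) /
        (∑ k ∈ Finset.Icc i n, pt k * ∏ j ∈ Finset.Icc 1 (i - 1), (1 - μ k / μ j)) :=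
  stmt3_general n μ pt p hμdec hμpos hpt hp hpn
end

section
/- The sequence μ_i(1−p_i) is strictly decreasing in i, i.e. μ_i(1−p_i) > μ_{i+1}(1−p_{i+1}) for every i = 1,...,n−1. Hence every hyperexponential distribution belongs to the class C_0 of distributions possessing a Coxian representation in which μ_i(1−p_i) is decreasing in i. -/
/-!
Write `A_i(k) = p̃_k ∏_{j<i} (1 - μ_k/μ_j)`, which is positive for `i ≤ k ≤ n`. Then
`μ_i (1 - p_i)` is the mean of `μ_k` over `k ≥ i` with weights `A_i(k)`, and `A_{i+1}(k)` is
proportional to `A_i(k) (μ_i - μ_k)`. Reweighting by `μ_i - μ_k`, which is smaller where `μ_k` is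
larger, strictly lowers the mean of a nonconstant `μ`: this is the strict Cauchy–Schwarz
inequality `(∑ w x)² < (∑ w) (∑ w x²)`.
-/

open Finset

theorem Finset.sq_sum_mul_lt_sum_mul_sum_mul_sq {ι : Type*} {s : Finset ι} {w x : ι → ℝ}
    (hw : ∀ i ∈ s, 0 < w i) (hx : ∃ i ∈ s, ∃ j ∈ s, x i ≠ x j) :
    (∑ i ∈ s, w i * x i) ^ 2 < (∑ i ∈ s, w i) * ∑ i ∈ s, w i * x i ^ 2 := by
  obtain ⟨i, hi, -⟩ := id hx
  have hW : 0 < ∑ i ∈ s, w i := sum_pos hw ⟨i, hi⟩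
  have hJensen := (Even.strictConvexOn_pow even_two two_ne_zero).map_sum_lt
    (t := s) (w := fun i => w i / ∑ i ∈ s, w i) (fun i hi => div_pos (hw i hi) hW)
    (by rw [← sum_div, div_self hW.ne']) (fun _ _ => Set.mem_univ _) hx
  simp only [smul_eq_mul, div_mul_eq_mul_div, ← sum_div, div_pow] at hJensen
  rw [div_lt_div_iff₀ (by positivity) hW] at hJensen
  nlinarith

theorem Finset.centerMass_mul_sub_lt {ι : Type*} {s : Finset ι} {w x : ι → ℝ} {c : ℝ}
    (hw : ∀ i ∈ s, 0 < w i) (hxc : ∀ i ∈ s, x i ≤ c) (hx : ∃ i ∈ s, ∃ j ∈ s, x i ≠ x j) :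
    s.centerMass (fun i => w i * (c - x i)) x < s.centerMass w x := by
  have hCS := sq_sum_mul_lt_sum_mul_sum_mul_sq hw hx
  obtain ⟨i, hi, j, hj, hij⟩ := hx
  have hW : 0 < ∑ i ∈ s, w i := sum_pos hw ⟨i, hi⟩
  have hlt : ∃ k ∈ s, x k < c := by
    rcases (hxc i hi).lt_or_eq with h | h
    · exact ⟨i, hi, h⟩
    · exact ⟨j, hj, (hxc j hj).lt_of_ne (h ▸ hij.symm)⟩
  obtain ⟨k, hk, hkc⟩ := hlt
  have hW' : 0 < ∑ i ∈ s, w i * (c - x i) :=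
    sum_pos' (fun i hi => mul_nonneg (hw i hi).le (sub_nonneg.2 (hxc i hi)))
      ⟨k, hk, mul_pos (hw k hk) (sub_pos.2 hkc)⟩
  have h1 : ∑ i ∈ s, w i * (c - x i) = c * ∑ i ∈ s, w i - ∑ i ∈ s, w i * x i := by
    rw [mul_sum, ← sum_sub_distrib]; exact sum_congr rfl fun _ _ => by ring
  have h2 : ∑ i ∈ s, w i * (c - x i) * x i
      = c * ∑ i ∈ s, w i * x i - ∑ i ∈ s, w i * x i ^ 2 := by
    rw [mul_sum, ← sum_sub_distrib]; exact sum_congr rfl fun _ _ => by ring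
  simp only [centerMass, smul_eq_mul, inv_mul_eq_div]
  rw [div_lt_div_iff₀ hW' hW, h1, h2]
  linarith

noncomputable def coxianWeight (μ pt : ℕ → ℝ) (i k : ℕ) : ℝ :=
  pt k * ∏ j ∈ Icc 1 (i - 1), (1 - μ k / μ j)

section CoxianWeight

variable {μ pt : ℕ → ℝ} {n m k : ℕ}

theorem coxianWeight_succ (hm : 1 ≤ m) :
    coxianWeight μ pt (m + 1) k = coxianWeight μ pt m k * (1 - μ k / μ m) := by
  obtain ⟨m, rfl⟩ : ∃ m', m = m' + 1 := ⟨m - 1, by omega⟩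
  simp only [coxianWeight, Nat.add_sub_cancel, prod_Icc_succ_top (by omega : 1 ≤ m + 1)]
  ring

theorem coxianWeight_succ_self (hm : 1 ≤ m) (hμm : μ m ≠ 0) :
    coxianWeight μ pt (m + 1) m = 0 := by
  rw [coxianWeight_succ hm, div_self hμm, sub_self, mul_zero]

theorem coxianWeight_pos (hμ : StrictAntiOn μ (Set.Icc 1 n))
    (hμpos : ∀ j ∈ Set.Icc 1 n, 0 < μ j) (hpt : 0 < pt k) (hmk : m ≤ k) (hkn : k ≤ n) :
    0 < coxianWeight μ pt m k := by
  refine mul_pos hpt (prod_pos fun j hj => ?_)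
  rw [mem_Icc] at hj
  have hj' : j ∈ Set.Icc 1 n := ⟨hj.1, by omega⟩
  rw [sub_pos, div_lt_one (hμpos j hj')]
  exact hμ hj' ⟨by omega, hkn⟩ (by omega)

theorem mul_one_sub_eq_centerMass_coxianWeight (hμ : StrictAntiOn μ (Set.Icc 1 n))
    (hμpos : ∀ j ∈ Set.Icc 1 n, 0 < μ j) (hpt : ∀ k ∈ Set.Icc 1 n, 0 < pt k)
    (hm : 1 ≤ m) (hmn : m ≤ n) :
    μ m * (1 - (∑ k ∈ Icc (m + 1) n, coxianWeight μ pt (m + 1) k) /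
        ∑ k ∈ Icc m n, coxianWeight μ pt m k) =
      (Icc m n).centerMass (coxianWeight μ pt m) μ := by
  have hμm : μ m ≠ 0 := (hμpos m ⟨hm, hmn⟩).ne'
  have hS : 0 < ∑ k ∈ Icc m n, coxianWeight μ pt m k :=
    sum_pos (fun k hk => by
      rw [mem_Icc] at hk
      exact coxianWeight_pos hμ hμpos (hpt k ⟨by omega, hk.2⟩) hk.1 hk.2)
      ⟨m, mem_Icc.2 ⟨le_rfl, hmn⟩⟩
  have hnum : ∑ k ∈ Icc (m + 1) n, coxianWeight μ pt (m + 1) k =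
      ∑ k ∈ Icc m n, coxianWeight μ pt m k * (1 - μ k / μ m) := calc
    _ = ∑ k ∈ Icc m n, coxianWeight μ pt (m + 1) k := by
      rw [← insert_Icc_add_one_left_eq_Icc hmn, sum_insert (by simp),
        coxianWeight_succ_self hm hμm, zero_add]
    _ = _ := sum_congr rfl fun k _ => coxianWeight_succ hm
  rw [hnum, centerMass, one_sub_div hS.ne', ← sum_sub_distrib, mul_div_assoc', smul_eq_mul,
    inv_mul_eq_div, mul_sum]
  congr 1
  refine sum_congr rfl fun k _ => ?_
  field_simp
  ring

theorem centerMass_coxianWeight_succ (hm : 1 ≤ m) (hμm : μ m ≠ 0) :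
    (Icc (m + 1) n).centerMass (coxianWeight μ pt (m + 1)) μ =
      (Icc m n).centerMass (fun k => coxianWeight μ pt m k * (μ m - μ k)) μ := calc
  _ = (Icc m n).centerMass (coxianWeight μ pt (m + 1)) μ :=
    centerMass_subset μ (Icc_subset_Icc_left m.le_succ) fun k hk hk' => by
      obtain rfl : k = m := by simp only [mem_Icc] at hk hk'; omega
      exact coxianWeight_succ_self hm hμm
  _ = (Icc m n).centerMass ((μ m)⁻¹ • fun k => coxianWeight μ pt m k * (μ m - μ k)) μ := by
    congr 1
    funext k
    rw [coxianWeight_succ hm, Pi.smul_apply, smul_eq_mul]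
    field_simp
  _ = _ := centerMass_smul_left _ μ (inv_ne_zero hμm)

end CoxianWeight

theorem stmt4_general (n : ℕ) (μ pt p : ℕ → ℝ)
    (hμdec : ∀ i j, 1 ≤ i → i < j → j ≤ n → μ j < μ i)
    (hμpos : 0 < μ n)
    (hpt : ∀ k, 1 ≤ k → k ≤ n → 0 < pt k)
    (hp : ∀ i, 1 ≤ i → i ≤ n - 1 →
      p i = (∑ k ∈ Finset.Icc (i + 1) n, pt k * ∏ j ∈ Finset.Icc 1 i, (1 - μ k / μ j)) /
            (∑ k ∈ Finset.Icc i n, pt k * ∏ j ∈ Finset.Icc 1 (i - 1), (1 - μ k / μ j)))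
    (hpn : p n = 0) :
    ∀ i, 1 ≤ i → i + 1 ≤ n → μ (i + 1) * (1 - p (i + 1)) < μ i * (1 - p i) := by
  have hμ : StrictAntiOn μ (Set.Icc 1 n) := fun i hi j hj hij => hμdec i j hi.1 hij hj.2
  have hμpos' : ∀ j ∈ Set.Icc 1 n, 0 < μ j := fun j hj =>
    hμpos.trans_le (hμ.antitoneOn hj ⟨hj.1.trans hj.2, le_rfl⟩ hj.2)
  have hpt' : ∀ k ∈ Set.Icc 1 n, 0 < pt k := fun k hk => hpt k hk.1 hk.2
  have hmean : ∀ m, 1 ≤ m → m ≤ n →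
      μ m * (1 - p m) = (Icc m n).centerMass (coxianWeight μ pt m) μ := by
    intro m hm hmn
    rw [← mul_one_sub_eq_centerMass_coxianWeight hμ hμpos' hpt' hm hmn]
    rcases hmn.lt_or_eq with hmn | rfl
    · rw [hp m hm (by omega)]
      rfl
    · rw [hpn, Icc_eq_empty (by omega), sum_empty, zero_div]
  intro i hi hin
  have hi' : i ∈ Set.Icc 1 n := ⟨hi, by omega⟩
  rw [hmean i hi hi'.2, hmean (i + 1) (by omega) hin,
    centerMass_coxianWeight_succ hi (hμpos' i hi').ne']
  have hμi : μ (i + 1) < μ i := hμ hi' ⟨by omega, hin⟩ (by omega)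
  refine centerMass_mul_sub_lt (fun k hk => ?_) (fun k hk => ?_)
    ⟨i, left_mem_Icc.2 hi'.2, i + 1, mem_Icc.2 ⟨by omega, hin⟩, hμi.ne'⟩
  all_goals rw [mem_Icc] at hk
  · exact coxianWeight_pos hμ hμpos' (hpt' k ⟨by omega, hk.2⟩) hk.1 hk.2
  · exact hμ.antitoneOn hi' ⟨by omega, hk.2⟩ hk.1

/-- Theorem 1 of the paper: for the Coxian representation of a hyperexponential
distribution, the sequence `μ i (1 − p i)` is strictly decreasing in `i`; hence every
hyperexponential distribution belongs to the class `C₀`.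
Products over empty ranges equal `1`. -/
theorem stmt4 (n : ℕ) (hn : 1 ≤ n) (μ pt p : ℕ → ℝ)
    (hμdec : ∀ i j, 1 ≤ i → i < j → j ≤ n → μ j < μ i)
    (hμpos : 0 < μ n)
    (hpt : ∀ k, 1 ≤ k → k ≤ n → 0 < pt k)
    (hptsum : ∑ k ∈ Finset.Icc 1 n, pt k = 1)
    (hp : ∀ i, 1 ≤ i → i ≤ n - 1 →
      p i = (∑ k ∈ Finset.Icc (i + 1) n, pt k * ∏ j ∈ Finset.Icc 1 i, (1 - μ k / μ j)) /
            (∑ k ∈ Finset.Icc i n, pt k * ∏ j ∈ Finset.Icc 1 (i - 1), (1 - μ k / μ j)))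
    (hpn : p n = 0) :
    ∀ i, 1 ≤ i → i + 1 ≤ n → μ (i + 1) * (1 - p (i + 1)) < μ i * (1 - p i) :=
  stmt4_general n μ pt p hμdec hμpos hpt hp hpn
end

section
/- Define R_n := 1/μ_n and R_{i−1} := 1/μ_{i−1} + p_{i−1} R_i for i = n, n−1, ..., 2. If μ_i(1−p_i) is strictly decreasing in i (i.e. μ_{i−1}(1−p_{i−1}) > μ_i(1−p_i) for i = 2,...,n), then R_i > R_{i−1} for every i = 2,...,n. -/
/-!
Write `ν i = μ i * (1 - p i)` for the completion rate of phase `i`. One step of the recurrence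
`R' = 1 / μ + p * R` satisfies
`R' - 1 / ν = p * (R - 1 / ν)` and `R - R' = (1 - p) * (R - 1 / ν)`.
Since `R n = 1 / ν n` and `1 / ν i` is strictly increasing in `i`, downward induction gives
`1 / ν (i - 1) < 1 / ν i ≤ R i`, so every step strictly decreases `R`.
-/

section OneStep

variable {μ p R : ℝ}

theorem step_sub_one_div_rate (hμ : μ ≠ 0) (hp : p ≠ 1) :
    1 / μ + p * R - 1 / (μ * (1 - p)) = p * (R - 1 / (μ * (1 - p))) := by
  have : 1 - p ≠ 0 := sub_ne_zero.mpr hp.symm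
  field_simp
  ring

theorem sub_step (hμ : μ ≠ 0) (hp : p ≠ 1) :
    R - (1 / μ + p * R) = (1 - p) * (R - 1 / (μ * (1 - p))) := by
  have : 1 - p ≠ 0 := sub_ne_zero.mpr hp.symm
  field_simp
  ring

theorem one_div_rate_le_step (hμ : 0 < μ) (hp₀ : 0 ≤ p) (hp₁ : p < 1)
    (hR : 1 / (μ * (1 - p)) ≤ R) : 1 / (μ * (1 - p)) ≤ 1 / μ + p * R := by
  have := step_sub_one_div_rate (R := R) hμ.ne' hp₁.ne
  nlinarith

theorem step_lt_of_one_div_rate_lt (hμ : 0 < μ) (hp : p < 1) (hR : 1 / (μ * (1 - p)) < R) :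
    1 / μ + p * R < R := by
  have := sub_step (R := R) hμ.ne' hp.ne
  nlinarith

end OneStep

section Coxian

variable {n : ℕ} {μ p R : ℕ → ℝ}

theorem rate_pos (hμ : ∀ i, 1 ≤ i → i ≤ n → 0 < μ i)
    (hp : ∀ i, 1 ≤ i → i ≤ n - 1 → 0 < p i ∧ p i < 1) (hpn : p n = 0)
    {i : ℕ} (hi₁ : 1 ≤ i) (hin : i ≤ n) : 0 < μ i * (1 - p i) := by
  rcases hin.lt_or_eq with hin | rfl
  · exact mul_pos (hμ i hi₁ hin.le) (sub_pos.mpr (hp i hi₁ (by omega)).2)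
  · simpa [hpn] using hμ i hi₁ le_rfl

theorem one_div_rate_le_remaining (hμ : ∀ i, 1 ≤ i → i ≤ n → 0 < μ i)
    (hp : ∀ i, 1 ≤ i → i ≤ n - 1 → 0 < p i ∧ p i < 1) (hpn : p n = 0)
    (hRn : R n = 1 / μ n)
    (hRrec : ∀ i, 2 ≤ i → i ≤ n → R (i - 1) = 1 / μ (i - 1) + p (i - 1) * R i)
    (hν : ∀ i, 2 ≤ i → i ≤ n → μ i * (1 - p i) < μ (i - 1) * (1 - p (i - 1)))
    {i : ℕ} (hi₁ : 1 ≤ i) (hin : i ≤ n) : 1 / (μ i * (1 - p i)) ≤ R i := by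
  induction hin using Nat.decreasingInduction with
  | self => simp [hRn, hpn]
  | of_succ k hkn ih =>
    have hpk := hp k hi₁ (by omega)
    have hRk : R k = 1 / μ k + p k * R (k + 1) := by simpa using hRrec (k + 1) (by omega) hkn
    have hνk : μ (k + 1) * (1 - p (k + 1)) < μ k * (1 - p k) := by
      simpa using hν (k + 1) (by omega) hkn
    have hrate : 1 / (μ k * (1 - p k)) < 1 / (μ (k + 1) * (1 - p (k + 1))) :=
      one_div_lt_one_div_of_lt (rate_pos hμ hp hpn (by omega) hkn) hνk
    rw [hRk]
    exact one_div_rate_le_step (hμ k hi₁ hkn.le) hpk.1.le hpk.2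
      (hrate.le.trans (ih (by omega)))

end Coxian

theorem stmt5_general (n : ℕ) (μ p R : ℕ → ℝ)
    (hμ : ∀ i, 1 ≤ i → i ≤ n → 0 < μ i)
    (hp : ∀ i, 1 ≤ i → i ≤ n - 1 → 0 < p i ∧ p i < 1)
    (hpn : p n = 0)
    (hRn : R n = 1 / μ n)
    (hRrec : ∀ i, 2 ≤ i → i ≤ n → R (i - 1) = 1 / μ (i - 1) + p (i - 1) * R i)
    (hν : ∀ i, 2 ≤ i → i ≤ n → μ i * (1 - p i) < μ (i - 1) * (1 - p (i - 1))) :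
    ∀ i, 2 ≤ i → i ≤ n → R (i - 1) < R i := by
  intro i hi₂ hin
  have hrate : 1 / (μ (i - 1) * (1 - p (i - 1))) < 1 / (μ i * (1 - p i)) :=
    one_div_lt_one_div_of_lt (rate_pos hμ hp hpn (by omega) hin) (hν i hi₂ hin)
  have hRi := one_div_rate_le_remaining hμ hp hpn hRn hRrec hν (by omega) hin
  rw [hRrec i hi₂ hin]
  exact step_lt_of_one_div_rate_lt (hμ (i - 1) (by omega) (by omega)) (hp (i - 1) (by omega) (by omega)).2
    (hrate.trans_le hRi)

/-- Lemma 2 of the paper: if `μ i (1 − p i)` is strictly decreasing in `i`, then the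
expected remaining service times `R i` of a Coxian job are strictly increasing in the
phase: `R (i−1) < R i` for `i = 2,...,n`. -/
theorem stmt5 (n : ℕ) (hn : 2 ≤ n) (μ p R : ℕ → ℝ)
    (hμ : ∀ i, 1 ≤ i → i ≤ n → 0 < μ i)
    (hp : ∀ i, 1 ≤ i → i ≤ n - 1 → 0 < p i ∧ p i < 1)
    (hpn : p n = 0)
    (hRn : R n = 1 / μ n)
    (hRrec : ∀ i, 2 ≤ i → i ≤ n → R (i - 1) = 1 / μ (i - 1) + p (i - 1) * R i)
    (hν : ∀ i, 2 ≤ i → i ≤ n → μ i * (1 - p i) < μ (i - 1) * (1 - p (i - 1))) :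
    ∀ i, 2 ≤ i → i ≤ n → R (i - 1) < R i :=
  stmt5_general n μ p R hμ hp hpn hRn hRrec hν
end

section
/- Let S be the n×n real matrix with S_{ii} = −μ_i for all i, S_{i,i+1} = p_i μ_i for i = 1,...,n−1, and all other entries 0, and set ν_i := μ_i(1−p_i) (with p_n = 0). Assume ν_i is strictly decreasing in i. Then for every t ≥ 0 the survival probability G(t) := ∑_{i=1}^n (exp(tS))_{1,i} is strictly positive, and the hazard rate h(t) := ( ∑_{i=1}^n (exp(tS))_{1,i} ν_i ) / G(t) is nonincreasing on [0,∞): h(s) ≥ h(t) whenever 0 ≤ s ≤ t. -/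
/-!
Let `x(t)` be the first row of `exp (t • S)`, `G = ∑ xᵢ` and `F = ∑ xᵢ νᵢ`. As `S` has nonnegative
off-diagonal entries, `x ≥ 0` and `x₁ > 0`, so `G > 0`. The rows of `S` sum to `-ν`, so `G' = -F`;
and `(S ν)ⱼ = -μⱼ νⱼ + pⱼ μⱼ νⱼ₊₁ ≤ -νⱼ²` because `ν` decreases, so `F' ≤ -∑ xⱼ νⱼ²`.
Cauchy–Schwarz gives `F² ≤ G ∑ xⱼ νⱼ²`, hence `F' G + F² ≤ 0`, which is `(F / G)' ≤ 0`.
-/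

open Finset NormedSpace Set Matrix

theorem antitoneOn_div_of_hasDerivAt {F G F' G' : ℝ → ℝ} {a : ℝ}
    (hF : ∀ t, HasDerivAt F (F' t) t) (hG : ∀ t, HasDerivAt G (G' t) t)
    (hG_pos : ∀ t ∈ Ici a, 0 < G t) (h : ∀ t ∈ Ioi a, F' t * G t ≤ F t * G' t) :
    AntitoneOn (fun t => F t / G t) (Ici a) := by
  refine antitoneOn_of_hasDerivWithinAt_nonpos (convex_Ici a)
    (f' := fun t => (F' t * G t - F t * G' t) / G t ^ 2)
    (fun t ht => ((hF t).continuousAt.div (hG t).continuousAt (hG_pos t ht).ne').continuousWithinAt)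
    (fun t ht => ?_) (fun t ht => ?_) <;> rw [interior_Ici] at ht
  · exact ((hF t).div (hG t) (hG_pos t (mem_Ici_of_Ioi ht)).ne').hasDerivWithinAt
  · exact div_nonpos_of_nonpos_of_nonneg (sub_nonpos.2 (h t ht)) (sq_nonneg _)

namespace Matrix

variable {ι : Type*}

def IsMetzler (A : Matrix ι ι ℝ) : Prop := ∀ i j, i ≠ j → 0 ≤ A i j

theorem IsMetzler.smul {A : Matrix ι ι ℝ} (hA : A.IsMetzler) {t : ℝ} (ht : 0 ≤ t) :
    (t • A).IsMetzler :=
  fun i j hij => mul_nonneg ht (hA i j hij)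

variable [Fintype ι] [DecidableEq ι]

section

attribute [local instance] Matrix.linftyOpNormedRing Matrix.linftyOpNormedAlgebra

theorem hasSum_exp_apply (A : Matrix ι ι ℝ) (i j : ι) :
    HasSum (fun k : ℕ => (k.factorial : ℝ)⁻¹ * (A ^ k) i j) (exp A i j) :=
  Pi.hasSum.1 (Pi.hasSum.1 (exp_series_hasSum_exp' (𝕂 := ℝ) A) i) j

theorem hasDerivAt_exp_smul_mulVec_apply (A : Matrix ι ι ℝ) (w : ι → ℝ) (i : ι) (t : ℝ) :
    HasDerivAt (fun u : ℝ => (exp (u • A) *ᵥ w) i) ((exp (t • A) *ᵥ (A *ᵥ w)) i) t := by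
  let L : Matrix ι ι ℝ →L[ℝ] ℝ := LinearMap.toContinuousLinearMap
    { toFun := fun M => (M *ᵥ w) i
      map_add' := fun M N => by simp [add_mulVec]
      map_smul' := fun c M => by simp [smul_mulVec] }
  exact (L.hasFDerivAt.comp_hasDerivAt t (hasDerivAt_exp_smul_const A t)).congr_deriv
    (congrFun (mulVec_mulVec w _ A).symm i)

end

theorem exp_apply_nonneg_of_nonneg {A : Matrix ι ι ℝ} (hA : ∀ i j, 0 ≤ A i j) (i j : ι) :
    0 ≤ exp A i j :=
  (hasSum_exp_apply A i j).nonneg fun k => mul_nonneg (by positivity) (pow_apply_nonneg hA k i j)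

theorem one_le_exp_apply_self_of_nonneg {A : Matrix ι ι ℝ} (hA : ∀ i j, 0 ≤ A i j) (i : ι) :
    1 ≤ exp A i i := by
  simpa using le_hasSum (hasSum_exp_apply A i i) 0
    fun k _ => mul_nonneg (by positivity) (pow_apply_nonneg hA k i i)

theorem exp_add_smul_one (A : Matrix ι ι ℝ) (c : ℝ) :
    exp (A + c • 1) = Real.exp c • exp A := by
  rw [exp_add_of_commute _ _ ((Commute.one_right A).smul_right c), smul_one_eq_diagonal,
    exp_diagonal, Pi.exp_def, ← Real.exp_eq_exp_ℝ, ← smul_one_eq_diagonal, mul_smul_one]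

namespace IsMetzler

variable {A : Matrix ι ι ℝ}

theorem exists_nonneg_add_smul_one (hA : A.IsMetzler) : ∃ c : ℝ, ∀ i j, 0 ≤ (A + c • 1) i j := by
  refine ⟨∑ k, |A k k|, fun i j => ?_⟩
  rcases eq_or_ne i j with rfl | hij
  · have := single_le_sum (fun k _ => abs_nonneg (A k k)) (mem_univ i)
    simp only [add_apply, smul_apply, one_apply_eq, smul_eq_mul, mul_one]
    linarith [neg_abs_le (A i i)]
  · simpa [one_apply_ne hij] using hA i j hij

/-- Shifting by `c • 1` makes `A` entrywise nonnegative and only rescales `exp A` by `exp c`. -/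
theorem exp_apply_nonneg (hA : A.IsMetzler) (i j : ι) : 0 ≤ exp A i j := by
  obtain ⟨c, hc⟩ := hA.exists_nonneg_add_smul_one
  have h := congrFun₂ (exp_add_smul_one A c) i j
  rw [smul_apply, smul_eq_mul] at h
  exact (mul_nonneg_iff_of_pos_left (Real.exp_pos c)).1 (h ▸ exp_apply_nonneg_of_nonneg hc i j)

theorem exp_apply_self_pos (hA : A.IsMetzler) (i : ι) : 0 < exp A i i := by
  obtain ⟨c, hc⟩ := hA.exists_nonneg_add_smul_one
  have h := congrFun₂ (exp_add_smul_one A c) i i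
  rw [smul_apply, smul_eq_mul] at h
  exact (mul_pos_iff_of_pos_left (Real.exp_pos c)).1
    (h ▸ zero_lt_one.trans_le (one_le_exp_apply_self_of_nonneg hc i))

theorem exp_mulVec_one_pos (hA : A.IsMetzler) (i : ι) : 0 < (exp A *ᵥ 1) i := by
  simpa [mulVec, dotProduct] using
    sum_pos' (fun j _ => hA.exp_apply_nonneg i j) ⟨i, mem_univ i, hA.exp_apply_self_pos i⟩

theorem antitoneOn_exp_smul_mulVec_div (hA : A.IsMetzler) {ν : ι → ℝ} (hrow : A *ᵥ 1 = -ν)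
    (hν : ∀ j, (A *ᵥ ν) j ≤ -ν j ^ 2) (i : ι) :
    AntitoneOn (fun t : ℝ => (exp (t • A) *ᵥ ν) i / (exp (t • A) *ᵥ 1) i) (Ici 0) := by
  refine antitoneOn_div_of_hasDerivAt (hasDerivAt_exp_smul_mulVec_apply A ν i)
    (hasDerivAt_exp_smul_mulVec_apply A 1 i) (fun t ht => (hA.smul ht).exp_mulVec_one_pos i)
    fun t ht => ?_
  have hx : ∀ j, 0 ≤ exp (t • A) i j := (hA.smul (le_of_lt ht)).exp_apply_nonneg i
  have hG : 0 ≤ (exp (t • A) *ᵥ 1) i := ((hA.smul (le_of_lt ht)).exp_mulVec_one_pos i).le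
  have hF' : (exp (t • A) *ᵥ (A *ᵥ ν)) i ≤ -∑ j, exp (t • A) i j * ν j ^ 2 := by
    simpa only [mulVec, dotProduct, ← sum_neg_distrib, mul_neg] using
      sum_le_sum fun j _ => mul_le_mul_of_nonneg_left (hν j) (hx j)
  have hCS : (exp (t • A) *ᵥ ν) i ^ 2 ≤ (exp (t • A) *ᵥ 1) i * ∑ j, exp (t • A) i j * ν j ^ 2 :=
    sum_sq_le_sum_mul_sum_of_sq_le_mul _ (fun j _ => by simpa using hx j)
      (fun j _ => mul_nonneg (hx j) (sq_nonneg _)) fun j _ => by simp only [Pi.one_apply]; nlinarith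
  rw [hrow, mulVec_neg, Pi.neg_apply]
  nlinarith [mul_le_mul_of_nonneg_right hF' hG]

end IsMetzler

end Matrix

section Coxian

variable {n : ℕ}

def coxianGenerator (μ p : Fin n → ℝ) : Matrix (Fin n) (Fin n) ℝ :=
  Matrix.of fun i j => if j = i then -μ i else if (j : ℕ) = (i : ℕ) + 1 then p i * μ i else 0

def coxianExitRate (μ p : Fin n → ℝ) (i : Fin n) : ℝ := μ i * (1 - p i)

variable {μ p : Fin n → ℝ}

theorem coxianGenerator_mulVec_apply (w : Fin n → ℝ) (i : Fin n) :
    (coxianGenerator μ p *ᵥ w) i =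
      -μ i * w i + if h : (i : ℕ) + 1 < n then p i * μ i * w ⟨i + 1, h⟩ else 0 := by
  simp only [mulVec, dotProduct, coxianGenerator, of_apply]
  split_ifs with h
  · have hne : i ≠ ⟨i + 1, h⟩ := by simp [Fin.ext_iff]
    rw [Fintype.sum_eq_add i ⟨i + 1, h⟩ hne]
    · simp [hne.symm]
    · rintro j ⟨hji, hj⟩
      have : (j : ℕ) ≠ i + 1 := fun hc => hj (Fin.ext hc)
      simp [hji, this]
  · rw [Fintype.sum_eq_single i, add_zero]
    · simp
    · intro j hji
      have : (j : ℕ) ≠ i + 1 := by omega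
      simp [hji, this]

theorem isMetzler_coxianGenerator (hμ : ∀ i, 0 ≤ μ i) (hp : ∀ i, 0 ≤ p i) :
    (coxianGenerator μ p).IsMetzler := by
  intro i j hij
  simp only [coxianGenerator, of_apply, if_neg (Ne.symm hij)]
  split_ifs
  exacts [mul_nonneg (hp i) (hμ i), le_rfl]

theorem coxianGenerator_mulVec_one (hpn : ∀ i : Fin n, (i : ℕ) + 1 = n → p i = 0) :
    coxianGenerator μ p *ᵥ 1 = -coxianExitRate μ p := by
  ext i
  rw [coxianGenerator_mulVec_apply]
  split_ifs with h
  · simp only [Pi.one_apply, Pi.neg_apply, coxianExitRate]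
    ring
  · simp [coxianExitRate, hpn i (by omega)]

theorem coxianGenerator_mulVec_exitRate_le (hμ : ∀ i, 0 ≤ μ i) (hp : ∀ i, 0 ≤ p i)
    (hpn : ∀ i : Fin n, (i : ℕ) + 1 = n → p i = 0) (hν : Antitone (coxianExitRate μ p))
    (i : Fin n) :
    (coxianGenerator μ p *ᵥ coxianExitRate μ p) i ≤ -coxianExitRate μ p i ^ 2 := by
  rw [coxianGenerator_mulVec_apply]
  split_ifs with h
  · have := mul_le_mul_of_nonneg_left (hν (Fin.le_iff_val_le_val.2 (Nat.le_succ i)) :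
      coxianExitRate μ p ⟨i + 1, h⟩ ≤ coxianExitRate μ p i) (mul_nonneg (hp i) (hμ i))
    simp only [coxianExitRate] at this ⊢
    nlinarith
  · simp [coxianExitRate, hpn i (by omega), sq]

end Coxian

/-- Proposition 2 of the paper: any distribution in the class `C₀` (a Coxian
distribution whose completion rates `ν i = μ i (1 − p i)` are strictly decreasing in
the phase) has positive survival probability and a nonincreasing hazard rate. -/
theorem stmt6 (n : ℕ) (hn : 1 ≤ n) (μ p : Fin n → ℝ)
    (hμ : ∀ i, 0 < μ i)
    (hp : ∀ i : Fin n, (i : ℕ) + 1 < n → 0 < p i ∧ p i < 1)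
    (hpn : ∀ i : Fin n, (i : ℕ) + 1 = n → p i = 0)
    (S : Matrix (Fin n) (Fin n) ℝ)
    (hS : S = Matrix.of fun i j : Fin n =>
      if j = i then -μ i else if (j : ℕ) = (i : ℕ) + 1 then p i * μ i else 0)
    (hν : ∀ i j : Fin n, i < j → μ j * (1 - p j) < μ i * (1 - p i)) :
    (∀ t : ℝ, 0 ≤ t →
      0 < ∑ i : Fin n, NormedSpace.exp (t • S) ⟨0, hn⟩ i) ∧
    (∀ s t : ℝ, 0 ≤ s → s ≤ t →
      (∑ i : Fin n, NormedSpace.exp (t • S) ⟨0, hn⟩ i * (μ i * (1 - p i))) /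
          (∑ i : Fin n, NormedSpace.exp (t • S) ⟨0, hn⟩ i) ≤
        (∑ i : Fin n, NormedSpace.exp (s • S) ⟨0, hn⟩ i * (μ i * (1 - p i))) /
          (∑ i : Fin n, NormedSpace.exp (s • S) ⟨0, hn⟩ i)) := by
  change S = coxianGenerator μ p at hS
  subst hS
  have hμ0 : ∀ i, 0 ≤ μ i := fun i => (hμ i).le
  have hp0 : ∀ i : Fin n, 0 ≤ p i := fun i =>
    if h : (i : ℕ) + 1 < n then (hp i h).1.le else (hpn i (by omega)).ge
  have hA := isMetzler_coxianGenerator hμ0 hp0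
  have hsurv : ∀ t : ℝ, ∑ i, exp (t • coxianGenerator μ p) ⟨0, hn⟩ i =
      (exp (t • coxianGenerator μ p) *ᵥ 1) ⟨0, hn⟩ := fun t => by simp [mulVec, dotProduct]
  refine ⟨fun t ht => hsurv t ▸ (hA.smul ht).exp_mulVec_one_pos _, fun s t hs hst => ?_⟩
  simp only [hsurv]
  exact hA.antitoneOn_exp_smul_mulVec_div (coxianGenerator_mulVec_one hpn)
    (coxianGenerator_mulVec_exitRate_le hμ0 hp0 hpn (StrictAnti.antitone hν)) _ hs
    (hs.trans hst) hst
end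

section
/- A^{(2)} = {(2,3)} ∪ {(n₂, n₃) ∈ ℝ² : n₂ > 2 and n₃ > (3/2) n₂}. -/
open Finset

/-- The order-`m+1` Coxian generator with rates `μ` and continuation probabilities `p`. -/
noncomputable def coxGen {m : ℕ} (μ p : Fin (m + 1) → ℝ) :
    Matrix (Fin (m + 1)) (Fin (m + 1)) ℝ :=
  Matrix.of fun i j =>
    if j = i then -μ i else if (j : ℕ) = (i : ℕ) + 1 then p i * μ i else 0

/-- The `k`-th moment `m_k(S) = k! ∑_j ((−S)^{−k})_{1,j}` of a Coxian generator. -/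
noncomputable def coxMoment {m : ℕ} (μ p : Fin (m + 1) → ℝ) (k : ℕ) : ℝ :=
  (k.factorial : ℝ) * ∑ j : Fin (m + 1), ((-(coxGen μ p))⁻¹ ^ k) 0 j

/-- `A^{(n)}`: the set of pairs `(n₂, n₃)` of normalized second and third moments of
Coxian generators of order at most `n` belonging to the class `C₀`
(i.e. with `μ i (1 − p i)` strictly decreasing in `i`). -/
def coxC0MomentSet (n : ℕ) : Set (ℝ × ℝ) :=
  {q | ∃ m : ℕ, m + 1 ≤ n ∧ ∃ μ p : Fin (m + 1) → ℝ,
    (∀ i, 0 < μ i) ∧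
    (∀ i : Fin (m + 1), (i : ℕ) < m → 0 < p i ∧ p i < 1) ∧
    p (Fin.last m) = 0 ∧
    (∀ i j : Fin (m + 1), i < j → μ j * (1 - p j) < μ i * (1 - p i)) ∧
    q.1 = coxMoment μ p 2 / (coxMoment μ p 1) ^ 2 ∧
    q.2 = coxMoment μ p 3 / (coxMoment μ p 1 * coxMoment μ p 2)}

/-!
An order-1 generator is exponential with `m_k = k!/μ^k`, which gives `(2, 3)`. For order 2 put
`a = 1/μ₁`, `b = 1/μ₂`, `q = p₁`: then `(-S)⁻¹ = [[a, qb], [0, b]]`, so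
`m_k = k! (a^k + q ∑_{i<k} a^i b^(k-i))`, the `C₀` condition reads `a < (1-q) b`, and
`n₂ - 2 = 2qb((1-q)b - a)/m₁²` and `n₃ - 3n₂/2 = 6qab²((1-q)b - a)/(m₁² m₂)` are both positive.
Conversely, given `n₂ = 2c > 2` and `n₃ = y > 3c`, the choice `a = u`, `b = (c-u)/(1-u)`,
`q = (1-u)²/(c-u)` gives `m₁ = 1` and `m₂ = 2c` for every `u ∈ (0, 1)`, and `n₃ = y` becomes the
quadratic `3(c-1)u² - c(y-3)u + c(y-3c) = 0`, which is positive at `0` and equals `-3(c-1)²` at `1`.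
-/

lemma neg_coxGen_inv_fin_one (μ p : Fin 1 → ℝ) (h0 : μ 0 ≠ 0) :
    (-coxGen μ p)⁻¹ = Matrix.diagonal fun _ => (μ 0)⁻¹ := by
  refine Matrix.inv_eq_right_inv ?_
  ext i j
  fin_cases i; fin_cases j
  simp [coxGen, Matrix.mul_apply, h0]

lemma coxMoment_fin_one (μ p : Fin 1 → ℝ) (h0 : μ 0 ≠ 0) (k : ℕ) :
    coxMoment μ p k = k.factorial * (μ 0)⁻¹ ^ k := by
  simp [coxMoment, neg_coxGen_inv_fin_one μ p h0, Matrix.diagonal_pow]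

lemma normalizedCoxMoment_fin_one (μ p : Fin 1 → ℝ) (h0 : μ 0 ≠ 0) :
    (coxMoment μ p 2 / coxMoment μ p 1 ^ 2,
      coxMoment μ p 3 / (coxMoment μ p 1 * coxMoment μ p 2)) = ((2 : ℝ), (3 : ℝ)) := by
  simp only [coxMoment_fin_one μ p h0, Nat.factorial]
  push_cast
  congr 1 <;> field_simp; ring

lemma exponential_mem_coxC0MomentSet {n : ℕ} (hn : 1 ≤ n) : ((2 : ℝ), (3 : ℝ)) ∈ coxC0MomentSet n :=
  ⟨0, hn, fun _ => 1, fun _ => 0, fun _ => one_pos, fun _ h => absurd h (Nat.not_lt_zero _), rfl,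
    fun i j h => (h.ne (Subsingleton.elim (α := Fin 1) i j)).elim,
    Prod.ext_iff.1 (normalizedCoxMoment_fin_one _ _ one_ne_zero).symm⟩

lemma upperTriangular_fin_two_pow (a b q : ℝ) (k : ℕ) :
    !![a, q * b; 0, b] ^ k = !![a ^ k, q * ∑ i ∈ range k, a ^ i * b ^ (k - i); 0, b ^ k] := by
  induction k with
  | zero => simp [Matrix.one_fin_two]
  | succ k ih =>
    rw [pow_succ', ih, Matrix.mul_fin_two, sum_range_succ']
    simp only [mul_zero, zero_mul, add_zero, Nat.sub_zero, pow_zero, one_mul, Nat.reduceSubDiff,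
      pow_succ, mul_sum, mul_add, sum_const_zero]
    ring_nf

lemma neg_coxGen_inv_fin_two (μ p : Fin 2 → ℝ) (h0 : μ 0 ≠ 0) (h1 : μ 1 ≠ 0) :
    (-coxGen μ p)⁻¹ = !![(μ 0)⁻¹, p 0 * (μ 1)⁻¹; 0, (μ 1)⁻¹] := by
  refine Matrix.inv_eq_right_inv ?_
  ext i j
  fin_cases i <;> fin_cases j <;> (simp [coxGen, Matrix.mul_apply, h0, h1]; try ring)

/-- The `k`-th moment of the two-phase Coxian distribution whose phases have means `a` and `b`
and which enters the second phase with probability `q`. -/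
noncomputable def twoPhaseMoment (a b q : ℝ) (k : ℕ) : ℝ :=
  k.factorial * (a ^ k + q * ∑ i ∈ range k, a ^ i * b ^ (k - i))

lemma coxMoment_fin_two (μ p : Fin 2 → ℝ) (h0 : μ 0 ≠ 0) (h1 : μ 1 ≠ 0) (k : ℕ) :
    coxMoment μ p k = twoPhaseMoment (μ 0)⁻¹ (μ 1)⁻¹ (p 0) k := by
  simp [coxMoment, twoPhaseMoment, neg_coxGen_inv_fin_two μ p h0 h1,
    upperTriangular_fin_two_pow]

section TwoPhase

variable (a b q : ℝ)

lemma twoPhaseMoment_one : twoPhaseMoment a b q 1 = a + q * b := by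
  simp [twoPhaseMoment]

lemma twoPhaseMoment_two : twoPhaseMoment a b q 2 = 2 * (a ^ 2 + q * (a * b + b ^ 2)) := by
  simp only [twoPhaseMoment, sum_range_succ, sum_range_zero, Nat.factorial]
  push_cast
  ring

lemma twoPhaseMoment_three :
    twoPhaseMoment a b q 3 = 6 * (a ^ 3 + q * (a ^ 2 * b + a * b ^ 2 + b ^ 3)) := by
  simp only [twoPhaseMoment, sum_range_succ, sum_range_zero, Nat.factorial]
  push_cast
  ring

end TwoPhase

lemma twoPhase_normalizedMoment_bounds {a b q : ℝ} (ha : 0 < a) (hb : 0 < b) (hq : 0 < q)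
    (hab : a < (1 - q) * b) :
    2 < twoPhaseMoment a b q 2 / twoPhaseMoment a b q 1 ^ 2 ∧
      3 / 2 * (twoPhaseMoment a b q 2 / twoPhaseMoment a b q 1 ^ 2) <
        twoPhaseMoment a b q 3 / (twoPhaseMoment a b q 1 * twoPhaseMoment a b q 2) := by
  rw [twoPhaseMoment_one, twoPhaseMoment_two, twoPhaseMoment_three]
  have hgap : 0 < (1 - q) * b - a := sub_pos.2 hab
  have hm1 : 0 < a + q * b := by positivity
  have hm2 : 0 < a ^ 2 + q * (a * b + b ^ 2) := by positivity
  have hn2 : 2 * (a ^ 2 + q * (a * b + b ^ 2)) / (a + q * b) ^ 2 - 2 =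
      2 * q * b * ((1 - q) * b - a) / (a + q * b) ^ 2 := by
    field_simp
    ring
  have hn3 : 6 * (a ^ 3 + q * (a ^ 2 * b + a * b ^ 2 + b ^ 3)) /
        ((a + q * b) * (2 * (a ^ 2 + q * (a * b + b ^ 2)))) -
      3 / 2 * (2 * (a ^ 2 + q * (a * b + b ^ 2)) / (a + q * b) ^ 2) =
      3 * q * a * b ^ 2 * ((1 - q) * b - a) / ((a + q * b) ^ 2 * (a ^ 2 + q * (a * b + b ^ 2))) := by
    field_simp
    ring
  constructor
  · rw [← sub_pos, hn2]
    positivity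
  · rw [← sub_pos, hn3]
    positivity

lemma exists_twoPhase_normalizedMoment_eq {x y : ℝ} (hx : 2 < x) (hy : 3 / 2 * x < y) :
    ∃ a b q : ℝ, 0 < a ∧ 0 < b ∧ 0 < q ∧ a < (1 - q) * b ∧
      twoPhaseMoment a b q 2 / twoPhaseMoment a b q 1 ^ 2 = x ∧
      twoPhaseMoment a b q 3 / (twoPhaseMoment a b q 1 * twoPhaseMoment a b q 2) = y := by
  obtain ⟨c, rfl⟩ : ∃ c, x = 2 * c := ⟨x / 2, by ring⟩
  have hc : 1 < c := by linarith
  have hyc : 3 * c < y := by linarith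
  obtain ⟨u, ⟨hu0, hu1⟩, hgu⟩ : ∃ u ∈ Set.Ioo (0 : ℝ) 1,
      3 * (c - 1) * u ^ 2 - c * (y - 3) * u + c * (y - 3 * c) = 0 :=
    intermediate_value_Ioo' zero_le_one (by fun_prop) ⟨by nlinarith, by nlinarith⟩
  have hcu : 0 < c - u := by linarith
  have h1u : 0 < 1 - u := by linarith
  refine ⟨u, (c - u) / (1 - u), (1 - u) ^ 2 / (c - u), hu0, by positivity, by positivity, ?_, ?_⟩
  · have hb : (1 - (1 - u) ^ 2 / (c - u)) * ((c - u) / (1 - u)) = (c - u) / (1 - u) - (1 - u) := by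
      field_simp
    rw [hb, lt_sub_iff_add_lt, add_sub_cancel, one_lt_div h1u]
    linarith
  · have hm1 : twoPhaseMoment u ((c - u) / (1 - u)) ((1 - u) ^ 2 / (c - u)) 1 = 1 := by
      rw [twoPhaseMoment_one]
      field_simp
      ring
    have hm2 : twoPhaseMoment u ((c - u) / (1 - u)) ((1 - u) ^ 2 / (c - u)) 2 = 2 * c := by
      rw [twoPhaseMoment_two]
      field_simp
      ring
    have hm3 : twoPhaseMoment u ((c - u) / (1 - u)) ((1 - u) ^ 2 / (c - u)) 3 = 2 * c * y := by
      rw [twoPhaseMoment_three]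
      field_simp
      linear_combination (-2) * hgu
    rw [hm1, hm2, hm3]
    constructor <;> field_simp

lemma mem_coxC0MomentSet_of_twoPhase {n : ℕ} (hn : 2 ≤ n) {a b q : ℝ} (ha : 0 < a) (hb : 0 < b)
    (hq : 0 < q) (hab : a < (1 - q) * b) :
    (twoPhaseMoment a b q 2 / twoPhaseMoment a b q 1 ^ 2,
      twoPhaseMoment a b q 3 / (twoPhaseMoment a b q 1 * twoPhaseMoment a b q 2)) ∈
      coxC0MomentSet n := by
  have hq1 : q < 1 := by nlinarith
  have hμ : ∀ i, 0 < ![a⁻¹, b⁻¹] i := Fin.forall_fin_two.2 ⟨inv_pos.2 ha, inv_pos.2 hb⟩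
  refine ⟨1, hn, ![a⁻¹, b⁻¹], ![q, 0], hμ, ?_, rfl, ?_, ?_, ?_⟩
  · exact Fin.forall_fin_two.2 ⟨fun _ => ⟨hq, hq1⟩, fun h => absurd h (lt_irrefl 1)⟩
  · refine Fin.strictAnti_iff_succ_lt.2 (Fin.forall_fin_one.2 ?_)
    change b⁻¹ * (1 - 0) < a⁻¹ * (1 - q)
    rwa [sub_zero, mul_one, ← div_eq_inv_mul, lt_div_iff₀ ha, inv_mul_eq_div, div_lt_iff₀ hb]
  all_goals simp only [coxMoment_fin_two _ _ (hμ 0).ne' (hμ 1).ne', Matrix.cons_val_zero,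
    Matrix.cons_val_one, inv_inv]

/-- Proposition 3 of the paper:
`A^{(2)} = {(2,3)} ∪ {(n₂,n₃) : n₂ > 2 ∧ n₃ > (3/2) n₂}`. -/
theorem stmt8 :
    coxC0MomentSet 2 =
      insert ((2 : ℝ), (3 : ℝ)) {q : ℝ × ℝ | 2 < q.1 ∧ 3 / 2 * q.1 < q.2} := by
  refine Set.Subset.antisymm ?_ ?_
  · rintro ⟨x, y⟩ ⟨m, hm, μ, p, hμ, hp, hlast, hC0, rfl, rfl⟩
    obtain rfl | rfl : m = 0 ∨ m = 1 := by omega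
    · exact Or.inl (normalizedCoxMoment_fin_one μ p (hμ 0).ne')
    · have hp1 : p 1 = 0 := hlast
      have hC0' : μ 1 < μ 0 * (1 - p 0) := by simpa [hp1] using hC0 0 1 Fin.zero_lt_one
      simp only [coxMoment_fin_two μ p (hμ 0).ne' (hμ 1).ne']
      refine Or.inr (twoPhase_normalizedMoment_bounds (inv_pos.2 (hμ 0)) (inv_pos.2 (hμ 1))
        (hp 0 Nat.zero_lt_one).1 ?_)
      rwa [← div_eq_mul_inv, lt_div_iff₀ (hμ 1), inv_mul_eq_div, div_lt_iff₀ (hμ 0), mul_comm]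
  · rintro ⟨x, y⟩ (h | ⟨hx, hy⟩)
    · exact h ▸ exponential_mem_coxC0MomentSet one_le_two
    · obtain ⟨a, b, q, ha, hb, hq, hab, rfl, rfl⟩ := exists_twoPhase_normalizedMoment_eq hx hy
      exact mem_coxC0MomentSet_of_twoPhase le_rfl ha hb hq hab
end

section
/- For every integer n ≥ 2, A^{(n)} = A^{(2)}; that is, A^{(n)} = {(2,3)} ∪ {(n₂, n₃) ∈ ℝ² : n₂ > 2 and n₃ > (3/2) n₂}. In particular, allowing more than two Coxian phases does not enlarge the set of second and third normalized moments that can be matched within the class C_0. -/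
open Finset

/-!
Write `a, b, c` for the reduced moments `m₁, m₂/2, m₃/6` of the chain started in phase `i`, and
`a', b', c'` for those of phase `i + 1`. With `x = 1/μᵢ` and `p = pᵢ` they obey the backward
recursion `a = x + p a'`, `b = x a + p b'`, `c = x b + p c'`. The region `n₂ > 2, n₃ > 3n₂/2` is
`a² < b, b² < a c`. One step of the recursion turns the non-strict inequalities for `(a', b', c')`
into strict ones for `(a, b, c)` as soon as `x < (1 - p) a'`, and the `C₀` condition is exactly what
carries the slack `1/μᵢ ≤ (1 - pᵢ) aᵢ` from phase `i + 1` to phase `i`. A single (exponential)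
phase gives the boundary point `(2, 3)`. Conversely, every point of the region is attained by a
two-phase `C₀` Coxian, whose parameters come from a root in `(0, 1)` of a quadratic.
-/

section Coxian

open Matrix

variable {m : ℕ} (μ p : Fin (m + 1) → ℝ)

lemma coxGen_mulVec_castSucc (v : Fin (m + 1) → ℝ) (i : Fin m) :
    (coxGen μ p *ᵥ v) i.castSucc = μ i.castSucc * (p i.castSucc * v i.succ - v i.castSucc) := by
  have hsucc : ∀ j : Fin (m + 1), (j : ℕ) = i + 1 ↔ j = i.succ := by simp [Fin.ext_iff]
  have hne : i.succ ≠ i.castSucc := Fin.castSucc_lt_succ.ne'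
  simp only [mulVec, dotProduct, coxGen, of_apply, Fin.val_castSucc, hsucc, ite_mul, neg_mul,
    zero_mul, sum_ite, filter_eq', mem_univ, ↓reduceIte, sum_neg_distrib, sum_singleton,
    mem_filter, hne, not_false_eq_true, and_self, sum_const_zero, add_zero]
  ring

lemma coxGen_mulVec_last (v : Fin (m + 1) → ℝ) :
    (coxGen μ p *ᵥ v) (Fin.last m) = -(μ (Fin.last m) * v (Fin.last m)) := by
  have hne : ∀ j : Fin (m + 1), (j : ℕ) ≠ m + 1 := fun j => j.isLt.ne
  simp [mulVec, dotProduct, coxGen, ite_mul, hne]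

lemma det_neg_coxGen : (-coxGen μ p).det = ∏ i, μ i := by
  rw [det_of_isUpperTriangular]
  · simp [coxGen]
  · intro i j hij
    have : (j : ℕ) < i := hij
    simp [coxGen, show j ≠ i from ne_of_lt hij, show (j : ℕ) ≠ i + 1 by omega]

/-- Entry `i` is `m_k / k!` for the chain started in phase `i`. -/
noncomputable def coxMomentVec (k : ℕ) : Fin (m + 1) → ℝ :=
  (-coxGen μ p)⁻¹ ^ k *ᵥ 1

lemma coxMoment_eq_factorial_mul (k : ℕ) :
    coxMoment μ p k = (k.factorial : ℝ) * coxMomentVec μ p k 0 := by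
  simp [coxMoment, coxMomentVec, mulVec, dotProduct]

lemma coxMomentVec_zero : coxMomentVec μ p 0 = 1 := by
  simp [coxMomentVec]

variable {μ p}

lemma neg_coxGen_mulVec_coxMomentVec_succ (hμ : ∀ i, μ i ≠ 0) (k : ℕ) :
    -coxGen μ p *ᵥ coxMomentVec μ p (k + 1) = coxMomentVec μ p k := by
  have hdet : IsUnit (-coxGen μ p).det := by
    rw [det_neg_coxGen]
    exact (Finset.prod_ne_zero_iff.2 fun i _ => hμ i).isUnit
  rw [coxMomentVec, coxMomentVec, mulVec_mulVec, pow_succ', ← mul_assoc, mul_nonsing_inv _ hdet,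
    one_mul]

lemma coxMomentVec_succ_castSucc (hμ : ∀ i, μ i ≠ 0) (k : ℕ) (i : Fin m) :
    coxMomentVec μ p (k + 1) i.castSucc =
      (μ i.castSucc)⁻¹ * coxMomentVec μ p k i.castSucc +
        p i.castSucc * coxMomentVec μ p (k + 1) i.succ := by
  have h := congrFun (neg_coxGen_mulVec_coxMomentVec_succ (p := p) hμ k) i.castSucc
  rw [neg_mulVec, Pi.neg_apply, coxGen_mulVec_castSucc] at h
  rw [← h]
  field_simp [hμ i.castSucc]
  ring

lemma coxMomentVec_succ_last (hμ : ∀ i, μ i ≠ 0) (k : ℕ) :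
    coxMomentVec μ p (k + 1) (Fin.last m) =
      (μ (Fin.last m))⁻¹ * coxMomentVec μ p k (Fin.last m) := by
  have h := congrFun (neg_coxGen_mulVec_coxMomentVec_succ (p := p) hμ k) (Fin.last m)
  rw [neg_mulVec, Pi.neg_apply, coxGen_mulVec_last, neg_neg] at h
  rw [← h, inv_mul_cancel_left₀ (hμ _)]

lemma coxMomentVec_last (hμ : ∀ i, μ i ≠ 0) (k : ℕ) :
    coxMomentVec μ p k (Fin.last m) = (μ (Fin.last m))⁻¹ ^ k := by
  induction k with
  | zero => simp [coxMomentVec]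
  | succ k ih => rw [coxMomentVec_succ_last hμ, ih, pow_succ']

end Coxian

/-- The key identities are `b - a² = p (B - A a)` and
`a c - b² = p (x (C - p A B - x B) + p (A C - B²))`. -/
lemma strict_moment_ineq_of_step {x p A B C a b c : ℝ} (hx : 0 < x) (hp : 0 < p) (hA : 0 < A)
    (hxA : x < (1 - p) * A) (hAB : A ^ 2 ≤ B) (hBC : B ^ 2 ≤ A * C)
    (ha : a = x + p * A) (hb : b = x * a + p * B) (hc : c = x * b + p * C) :
    0 < a ∧ x < (1 - p) * a ∧ a ^ 2 < b ∧ b ^ 2 < a * c := by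
  subst ha hb hc
  have hgap : 0 < (1 - p) * A - x := sub_pos.2 hxA
  have hB : 0 < B := (pow_pos hA 2).trans_le hAB
  have hC : 0 < C - p * A * B - x * B := by
    have : 0 < A * (C - p * A * B - x * B) := by
      linarith [mul_pos (mul_pos hA hB) hgap, mul_le_mul_of_nonneg_left hAB hB.le]
    exact pos_of_mul_pos_right this hA.le
  refine ⟨by positivity, by linarith [mul_pos hp hgap], ?_, ?_⟩
  · linarith [mul_pos hp (mul_pos hA hgap), mul_nonneg hp.le (sub_nonneg.2 hAB)]
  · linarith [mul_pos hp (mul_pos hx hC), mul_nonneg (mul_nonneg hp.le hp.le) (sub_nonneg.2 hBC)]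

lemma normalized_moments_ineq {a b c : ℝ} (ha : 0 < a) (hab : a ^ 2 < b) (hbc : b ^ 2 < a * c) :
    2 < 2 * b / a ^ 2 ∧ 3 / 2 * (2 * b / a ^ 2) < 3 * c / (a * b) := by
  have hb : 0 < b := (pow_pos ha 2).trans hab
  constructor
  · rw [lt_div_iff₀ (by positivity)]
    linarith
  · rw [show 3 / 2 * (2 * b / a ^ 2) = 3 * b / a ^ 2 by ring,
      div_lt_div_iff₀ (by positivity) (by positivity)]
    nlinarith [mul_lt_mul_of_pos_left hbc ha]

/-- With `u := p y` and `d := β - 1`, the three equations force `x = 1 - u`, `y = 1 + d / u` and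
`d u² + (γ - 3 d - 1) u - d² = 0`; this quadratic is `-d² < 0` at `0` and `γ - β² > 0` at `1`. -/
lemma exists_two_phase_params {β γ : ℝ} (hβ : 1 < β) (hγ : β ^ 2 < γ) :
    ∃ x y p : ℝ, 0 < x ∧ 0 < y ∧ 0 < p ∧ x < (1 - p) * y ∧
      x + p * y = 1 ∧ x + p * y ^ 2 = β ∧ x * β + p * y ^ 3 = γ := by
  obtain ⟨d, hd, rfl⟩ : ∃ d, 0 < d ∧ β = 1 + d := ⟨β - 1, by linarith, by ring⟩
  let g : ℝ → ℝ := fun u => d * u ^ 2 + (γ - 3 * d - 1) * u - d ^ 2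
  have hzero : (0 : ℝ) ∈ Set.Ioo (g 0) (g 1) :=
    ⟨by simp only [g]; nlinarith, by simp only [g]; nlinarith⟩
  obtain ⟨u, ⟨hu0, hu1⟩, hgu⟩ :=
    intermediate_value_Ioo zero_le_one (by fun_prop : Continuous g).continuousOn hzero
  have hud : 0 < u + d := by positivity
  refine ⟨1 - u, 1 + d / u, u ^ 2 / (u + d), by linarith, by positivity, by positivity,
    ?_, ?_, ?_, ?_⟩
  · have : (1 - u ^ 2 / (u + d)) * (1 + d / u) = 1 - u + d / u := by field_simp; ring
    linarith [div_pos hd hu0]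
  · field_simp; ring
  · field_simp; ring
  · simp only [g] at hgu
    field_simp
    linear_combination -hgu

section C0

variable {m : ℕ}

def IsC0Coxian (μ p : Fin (m + 1) → ℝ) : Prop :=
  (∀ i, 0 < μ i) ∧ (∀ i : Fin (m + 1), (i : ℕ) < m → 0 < p i ∧ p i < 1) ∧
    p (Fin.last m) = 0 ∧ ∀ i j : Fin (m + 1), i < j → μ j * (1 - p j) < μ i * (1 - p i)

noncomputable def coxNormalizedMoments (μ p : Fin (m + 1) → ℝ) : ℝ × ℝ :=
  (coxMoment μ p 2 / coxMoment μ p 1 ^ 2, coxMoment μ p 3 / (coxMoment μ p 1 * coxMoment μ p 2))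

lemma mem_coxC0MomentSet {n : ℕ} {q : ℝ × ℝ} :
    q ∈ coxC0MomentSet n ↔
      ∃ m, m + 1 ≤ n ∧ ∃ μ p : Fin (m + 1) → ℝ, IsC0Coxian μ p ∧ coxNormalizedMoments μ p = q := by
  simp [coxC0MomentSet, IsC0Coxian, coxNormalizedMoments, Prod.ext_iff, and_assoc, eq_comm]

lemma coxNormalizedMoments_eq (μ p : Fin (m + 1) → ℝ) :
    coxNormalizedMoments μ p =
      (2 * coxMomentVec μ p 2 0 / coxMomentVec μ p 1 0 ^ 2,
        3 * coxMomentVec μ p 3 0 / (coxMomentVec μ p 1 0 * coxMomentVec μ p 2 0)) := by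
  simp only [coxNormalizedMoments, coxMoment_eq_factorial_mul, Nat.factorial]
  push_cast
  ring_nf

theorem IsC0Coxian.coxMomentVec_ineq {μ p : Fin (m + 1) → ℝ} (h : IsC0Coxian μ p)
    (j : Fin (m + 1)) :
    0 < coxMomentVec μ p 1 j ∧ (μ j)⁻¹ ≤ (1 - p j) * coxMomentVec μ p 1 j ∧
      coxMomentVec μ p 1 j ^ 2 ≤ coxMomentVec μ p 2 j ∧
      coxMomentVec μ p 2 j ^ 2 ≤ coxMomentVec μ p 1 j * coxMomentVec μ p 3 j ∧
      ((j : ℕ) < m → coxMomentVec μ p 1 j ^ 2 < coxMomentVec μ p 2 j ∧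
        coxMomentVec μ p 2 j ^ 2 < coxMomentVec μ p 1 j * coxMomentVec μ p 3 j) := by
  obtain ⟨hμ, hp, hlast, hexit⟩ := h
  have hμ0 : ∀ i, μ i ≠ 0 := fun i => (hμ i).ne'
  induction j using Fin.reverseInduction with
  | last =>
    have hx := inv_pos.2 (hμ (Fin.last m))
    simp only [coxMomentVec_last hμ0, hlast, Fin.val_last, lt_irrefl]
    exact ⟨by positivity, by simp, le_of_eq (by ring), le_of_eq (by ring), by simp⟩
  | cast i ih =>
    obtain ⟨hA, hxA, hAB, hBC, -⟩ := ih
    have hslack : (μ i.castSucc)⁻¹ < (1 - p i.castSucc) * coxMomentVec μ p 1 i.succ := by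
      rw [inv_le_iff_one_le_mul₀' (hμ _)] at hxA
      rw [inv_lt_iff_one_lt_mul₀' (hμ _)]
      linarith [mul_lt_mul_of_pos_right (hexit _ _ (Fin.castSucc_lt_succ (i := i))) hA]
    have hrec := fun k => coxMomentVec_succ_castSucc (p := p) hμ0 k i
    obtain ⟨ha, hxa, hab, hbc⟩ :=
      strict_moment_ineq_of_step (inv_pos.2 (hμ _)) (hp i.castSucc i.isLt).1 hA hslack hAB hBC
        (by simpa [coxMomentVec_zero] using hrec 0) (hrec 1) (hrec 2)
    exact ⟨ha, hxa.le, hab.le, hbc.le, fun _ => ⟨hab, hbc⟩⟩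

lemma coxNormalizedMoments_of_order_one {μ : Fin 1 → ℝ} (hμ : μ 0 ≠ 0) (p : Fin 1 → ℝ) :
    coxNormalizedMoments μ p = (2, 3) := by
  have hμ' : ∀ i, μ i ≠ 0 := Fin.forall_fin_one.2 hμ
  have := hμ' (Fin.last 0)
  rw [coxNormalizedMoments_eq, show (0 : Fin 1) = Fin.last 0 from rfl]
  simp only [coxMomentVec_last hμ', Prod.mk.injEq]
  constructor <;> field_simp

theorem IsC0Coxian.coxNormalizedMoments_mem {μ p : Fin (m + 1) → ℝ} (h : IsC0Coxian μ p) :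
    coxNormalizedMoments μ p ∈
      insert ((2 : ℝ), (3 : ℝ)) {q : ℝ × ℝ | 2 < q.1 ∧ 3 / 2 * q.1 < q.2} := by
  rcases Nat.eq_zero_or_pos m with rfl | hm
  · exact .inl (coxNormalizedMoments_of_order_one (h.1 0).ne' p)
  · obtain ⟨ha, -, -, -, hstrict⟩ := h.coxMomentVec_ineq 0
    obtain ⟨hab, hbc⟩ := hstrict hm
    rw [coxNormalizedMoments_eq]
    exact .inr (normalized_moments_ineq ha hab hbc)

lemma isC0Coxian_order_one {μ : ℝ} (hμ : 0 < μ) : IsC0Coxian (fun _ : Fin 1 => μ) (fun _ => 0) :=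
  ⟨fun _ => hμ, by simp, rfl, by simp⟩

lemma coxMomentVec_two_phase {x y : ℝ} (hx : x ≠ 0) (hy : y ≠ 0) (p q : ℝ) (k : ℕ) :
    coxMomentVec ![x⁻¹, y⁻¹] ![p, q] (k + 1) 0 =
      x * coxMomentVec ![x⁻¹, y⁻¹] ![p, q] k 0 + p * y ^ (k + 1) := by
  have hμ : ∀ i, ![x⁻¹, y⁻¹] i ≠ 0 := Fin.forall_fin_two.2 ⟨inv_ne_zero hx, inv_ne_zero hy⟩
  have h := coxMomentVec_succ_castSucc (p := ![p, q]) hμ k 0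
  rw [show (Fin.succ 0 : Fin 2) = Fin.last 1 from rfl, coxMomentVec_last hμ] at h
  simpa using h

theorem exists_isC0Coxian_two_phase {n₂ n₃ : ℝ} (h₂ : 2 < n₂) (h₃ : 3 / 2 * n₂ < n₃) :
    ∃ μ p : Fin 2 → ℝ, IsC0Coxian μ p ∧ coxNormalizedMoments μ p = (n₂, n₃) := by
  obtain ⟨x, y, p, hx, hy, hp, hxy, h1, h2, h3⟩ :=
    exists_two_phase_params (β := n₂ / 2) (γ := n₂ * n₃ / 6) (by linarith)
      (by nlinarith [mul_lt_mul_of_pos_left h₃ (by linarith : (0 : ℝ) < n₂)])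
  have hp1 : 0 < 1 - p := pos_of_mul_pos_left (hx.trans hxy) hy.le
  refine ⟨![x⁻¹, y⁻¹], ![p, 0], ⟨?_, ?_, rfl, ?_⟩, ?_⟩
  · exact Fin.forall_fin_two.2 ⟨inv_pos.2 hx, inv_pos.2 hy⟩
  · intro i hi
    obtain rfl : i = 0 := Fin.ext (Nat.lt_one_iff.1 hi)
    exact ⟨hp, by simpa using hp1⟩
  · intro i j hij
    obtain ⟨rfl, rfl⟩ := (by decide : ∀ i j : Fin 2, i < j → i = 0 ∧ j = 1) i j hij
    show y⁻¹ * (1 - 0) < x⁻¹ * (1 - p)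
    rw [sub_zero, mul_one, inv_mul_eq_div, lt_div_iff₀ hx, inv_mul_eq_div, div_lt_iff₀ hy]
    exact hxy
  · have hw1 : coxMomentVec ![x⁻¹, y⁻¹] ![p, 0] 1 0 = 1 := by
      rw [coxMomentVec_two_phase hx.ne' hy.ne', coxMomentVec_zero]
      simpa using h1
    have hw2 : coxMomentVec ![x⁻¹, y⁻¹] ![p, 0] 2 0 = n₂ / 2 := by
      rw [coxMomentVec_two_phase hx.ne' hy.ne', hw1, ← h2]
      ring
    have hw3 : coxMomentVec ![x⁻¹, y⁻¹] ![p, 0] 3 0 = n₂ * n₃ / 6 := by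
      rw [coxMomentVec_two_phase hx.ne' hy.ne', hw2, ← h3]
    rw [coxNormalizedMoments_eq, hw1, hw2, hw3, Prod.mk.injEq]
    constructor
    · field_simp
    · field_simp
      ring

end C0

/-- Proposition 4 of the paper: for every `n ≥ 2`, `A^{(n)} = A^{(2)}`, i.e.
`A^{(n)} = {(2,3)} ∪ {(n₂,n₃) : n₂ > 2 ∧ n₃ > (3/2) n₂}`; allowing more than two
Coxian phases does not enlarge the set of matchable normalized moments within `C₀`. -/
theorem stmt9 (n : ℕ) (hn : 2 ≤ n) :
    coxC0MomentSet n =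
      insert ((2 : ℝ), (3 : ℝ)) {q : ℝ × ℝ | 2 < q.1 ∧ 3 / 2 * q.1 < q.2} := by
  ext q
  rw [mem_coxC0MomentSet]
  constructor
  · rintro ⟨m, -, μ, p, h, rfl⟩
    exact h.coxNormalizedMoments_mem
  · rintro (rfl | ⟨h₂, h₃⟩)
    · exact ⟨0, by omega, _, _, isC0Coxian_order_one one_pos,
        coxNormalizedMoments_of_order_one one_ne_zero _⟩
    · obtain ⟨μ, p, h, hq⟩ := exists_isC0Coxian_two_phase h₂ h₃
      exact ⟨1, hn, μ, p, h, hq⟩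
end

section
/- Let π_{1,1}, ..., π_{1,n} be real numbers and set π_{1,n+1} := 0. Suppose that for every i = 2,...,n, (π_{1,i−1} − π_{1,i}) p_{i−1} μ_{i−1} = ∑_{j=i}^n (π_{1,j} − π_{1,j+1}) μ_j (1−p_j), and suppose the mean job size is one, i.e. ∑_{j=1}^n (∏_{s=1}^{j−1} p_s)/μ_j = 1. Then π_{1,i} = π_{1,1} · ∑_{j=i}^n (1/μ_j) ∏_{s=1}^{j−1} p_s for every i = 1,...,n. -/
open Finset

/-!
Write `a j = (π j - π (j + 1)) μ j` for the flow out of phase `j`. At a fixed point the flow into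
phase `j + 1`, namely `a j p j`, equals the total flow `∑_{k > j} a k (1 - p k)` leaving the
system from the phases above `j`; since `p n = 0`, the tail sums collapse to
`∑_{k ≥ j} a k (1 - p k) = a j`, hence `a (j + 1) = a j p j` and `a j = a 1 ∏_{s < j} p s`.
Telescoping `π i = ∑_{j ≥ i} a j / μ j` and the unit mean job size, which gives `π 1 = a 1`,
finish the proof.
-/

section Balance

variable {n : ℕ} {a q : ℕ → ℝ}

theorem sum_Icc_mul_one_sub_eq_of_balance (hq : q n = 0)
    (hbal : ∀ i, 1 ≤ i → i < n → a i * q i = ∑ j ∈ Icc (i + 1) n, a j * (1 - q j))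
    {i : ℕ} (hi : 1 ≤ i) (hin : i ≤ n) :
    ∑ j ∈ Icc i n, a j * (1 - q j) = a i := by
  rw [← insert_Icc_add_one_left_eq_Icc hin, sum_insert (by simp)]
  rcases hin.lt_or_eq with hlt | rfl
  · rw [← hbal i hi hlt]; ring
  · simp [hq]

theorem succ_eq_mul_of_balance (hq : q n = 0)
    (hbal : ∀ i, 1 ≤ i → i < n → a i * q i = ∑ j ∈ Icc (i + 1) n, a j * (1 - q j))
    {i : ℕ} (hi : 1 ≤ i) (hin : i < n) :
    a (i + 1) = a i * q i := by
  rw [hbal i hi hin, sum_Icc_mul_one_sub_eq_of_balance hq hbal (by omega) hin]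

theorem eq_mul_prod_of_succ_eq_mul (hstep : ∀ i, 1 ≤ i → i < n → a (i + 1) = a i * q i)
    {j : ℕ} (hj : 1 ≤ j) (hjn : j ≤ n) :
    a j = a 1 * ∏ s ∈ Icc 1 (j - 1), q s := by
  induction j, hj using Nat.le_induction with
  | base => simp
  | succ j hj ih =>
    rw [hstep j hj (by omega), ih (by omega), Nat.add_sub_cancel,
      ← insert_Icc_sub_one_right_eq_Icc hj, prod_insert (by simp only [mem_Icc]; omega)]
    ring

end Balance

theorem eq_mul_sum_div_of_flow {n : ℕ} {π μ w : ℕ → ℝ} {c : ℝ}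
    (hμ : ∀ j, 1 ≤ j → j ≤ n → 0 < μ j) (htop : π (n + 1) = 0)
    (hflow : ∀ j, 1 ≤ j → j ≤ n → (π j - π (j + 1)) * μ j = c * w j)
    {i : ℕ} (hi : 1 ≤ i) (hin : i ≤ n) :
    π i = c * ∑ j ∈ Icc i n, w j / μ j := by
  have htel : ∑ j ∈ Icc i n, (π (j + 1) - π j) = π (n + 1) - π i := sum_Icc_sub hin π
  rw [htop, zero_sub, ← neg_eq_iff_eq_neg, ← sum_neg_distrib] at htel
  rw [← htel, mul_sum]
  refine sum_congr rfl fun j hj => ?_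
  obtain ⟨hij, hjn⟩ := mem_Icc.mp hj
  rw [neg_sub, mul_div_assoc', eq_div_iff (hμ j (by omega) hjn).ne', hflow j (by omega) hjn]

theorem stmt10_general (n : ℕ) (μ p : ℕ → ℝ) (π : ℕ → ℝ)
    (hμ : ∀ i, 1 ≤ i → i ≤ n → 0 < μ i)
    (hpn : p n = 0)
    (hπtop : π (n + 1) = 0)
    (hfix : ∀ i, 2 ≤ i → i ≤ n →
      (π (i - 1) - π i) * (p (i - 1) * μ (i - 1)) =
        ∑ j ∈ Finset.Icc i n, (π j - π (j + 1)) * (μ j * (1 - p j)))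
    (hmean : ∑ j ∈ Finset.Icc 1 n, (∏ s ∈ Finset.Icc 1 (j - 1), p s) / μ j = 1) :
    ∀ i, 1 ≤ i → i ≤ n →
      π i = π 1 * ∑ j ∈ Finset.Icc i n, (1 / μ j) * ∏ s ∈ Finset.Icc 1 (j - 1), p s := by
  intro i hi hin
  set a : ℕ → ℝ := fun j => (π j - π (j + 1)) * μ j with ha
  have hbal : ∀ k, 1 ≤ k → k < n → a k * p k = ∑ j ∈ Icc (k + 1) n, a j * (1 - p j) := by
    intro k hk hkn
    have h := hfix (k + 1) (by omega) (by omega)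
    rw [Nat.add_sub_cancel, mul_comm (p k)] at h
    simpa only [ha, mul_assoc] using h
  have hflow : ∀ j, 1 ≤ j → j ≤ n → a j = a 1 * ∏ s ∈ Icc 1 (j - 1), p s :=
    fun _ => eq_mul_prod_of_succ_eq_mul fun _ => succ_eq_mul_of_balance hpn hbal
  have hπ1 : π 1 = a 1 := by
    simpa [hmean] using eq_mul_sum_div_of_flow hμ hπtop hflow le_rfl (hi.trans hin)
  simp only [one_div_mul_eq_div]
  rw [hπ1]
  exact eq_mul_sum_div_of_flow hμ hπtop hflow hi hin

/-- Proposition 5 of the paper: at any fixed point of the mean-field ODE system, the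
phase distribution at queue length one is proportional to
`∑_{j=i}^n (1/μ j) ∏_{s=1}^{j−1} p s`. Products over empty ranges equal `1`. -/
theorem stmt10 (n : ℕ) (hn : 1 ≤ n) (μ p : ℕ → ℝ) (π : ℕ → ℝ)
    (hμ : ∀ i, 1 ≤ i → i ≤ n → 0 < μ i)
    (hp : ∀ i, 1 ≤ i → i ≤ n - 1 → 0 < p i ∧ p i < 1)
    (hpn : p n = 0)
    (hπtop : π (n + 1) = 0)
    (hfix : ∀ i, 2 ≤ i → i ≤ n →
      (π (i - 1) - π i) * (p (i - 1) * μ (i - 1)) =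
        ∑ j ∈ Finset.Icc i n, (π j - π (j + 1)) * (μ j * (1 - p j)))
    (hmean : ∑ j ∈ Finset.Icc 1 n, (∏ s ∈ Finset.Icc 1 (j - 1), p s) / μ j = 1) :
    ∀ i, 1 ≤ i → i ≤ n →
      π i = π 1 * ∑ j ∈ Finset.Icc i n, (1 / μ j) * ∏ s ∈ Finset.Icc 1 (j - 1), p s :=
  stmt10_general n μ p π hμ hpn hπtop hfix hmean
end

section
/- For every h ∈ Ω_B and all integers B ≥ ℓ_1 ≥ ℓ_2 ≥ ... ≥ ℓ_n ≥ 1, it holds that h_{ℓ_1,1} + ∑_{i=2}^n (h_{ℓ_i,i} − h_{ℓ_{i−1},i}) ≤ h_{ℓ_n,1}. -/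
open Finset

namespace MeanField

/-- Boundary-extended state: the conventions `h_{0,1} = 1`, `h_{B+1,i} = 0` and
`h_{ℓ,n+1} = 0`. -/
noncomputable def Ext (B n : ℕ) (h : ℕ → ℕ → ℝ) (ℓ i : ℕ) : ℝ :=
  if ℓ = 0 then 1 else if ℓ = B + 1 then 0 else if i = n + 1 then 0 else h ℓ i

/-- Membership in the state space `Ω_B`. -/
def MemOmega (B n : ℕ) (h : ℕ → ℕ → ℝ) : Prop :=
  ∀ ℓ i, 1 ≤ ℓ → ℓ ≤ B → 1 ≤ i → i ≤ n →
    0 ≤ h ℓ i ∧ h ℓ i ≤ 1 ∧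
    Ext B n h ℓ (i + 1) ≤ h ℓ i ∧
    Ext B n h (ℓ + 1) i ≤ h ℓ i ∧
    Ext B n h (ℓ + 1) i + Ext B n h ℓ (i + 1) ≤ h ℓ i + Ext B n h (ℓ + 1) (i + 1)

/-- Valid index tuples `B ≥ ℓ_1 ≥ ℓ_2 ≥ ... ≥ ℓ_n ≥ 1` with `ℓ_1 > ℓ_n`. -/
def ValidTuple (B n : ℕ) (L : ℕ → ℕ) : Prop :=
  (∀ i, 1 ≤ i → i ≤ n → 1 ≤ L i ∧ L i ≤ B) ∧
  (∀ i, 2 ≤ i → i ≤ n → L i ≤ L (i - 1)) ∧ L n < L 1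

/-- `g_{(ℓ_1,...,ℓ_n)}(h) = h_{ℓ_1,1} + ∑_{i=2}^n (h_{ℓ_i,i} − h_{ℓ_{i−1},i})`. -/
noncomputable def gfun (n : ℕ) (L : ℕ → ℕ) (h : ℕ → ℕ → ℝ) : ℝ :=
  h (L 1) 1 + ∑ i ∈ Finset.Icc 2 n, (h (L i) i - h (L (i - 1)) i)

/-- `f_{(ℓ_1,...,ℓ_n)}(h) = f_{ℓ_1,1}(h) + ∑_{i=2}^n (f_{ℓ_i,i}(h) − f_{ℓ_{i−1},i}(h))`. -/
noncomputable def ffun (n : ℕ) (f : ℕ → ℕ → (ℕ → ℕ → ℝ) → ℝ) (L : ℕ → ℕ)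
    (h : ℕ → ℕ → ℝ) : ℝ :=
  f (L 1) 1 h + ∑ i ∈ Finset.Icc 2 n, (f (L i) i h - f (L (i - 1)) i h)

/-- The partial order `≤_C` on `Ω_B`. -/
def LeC (B n : ℕ) (h h' : ℕ → ℕ → ℝ) : Prop :=
  (∀ ℓ i, 1 ≤ ℓ → ℓ ≤ B → 1 ≤ i → i ≤ n → h ℓ i ≤ h' ℓ i) ∧
  (∀ L, ValidTuple B n L → gfun n L h ≤ gfun n L h')

/-- The right-hand side of the mean-field ODE system for coordinate `(ℓ, i)`. -/
noncomputable def drift (B n : ℕ) (μ p : ℕ → ℝ) (f : ℕ → ℕ → (ℕ → ℕ → ℝ) → ℝ)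
    (ℓ i : ℕ) (h : ℕ → ℕ → ℝ) : ℝ :=
  if i = 1 then
    f ℓ 1 h - ∑ j ∈ Finset.Icc 1 n,
      ((Ext B n h ℓ j - Ext B n h ℓ (j + 1)) -
        (Ext B n h (ℓ + 1) j - Ext B n h (ℓ + 1) (j + 1))) * (μ j * (1 - p j))
  else
    (if 1 < ℓ then f ℓ i h else 0) + (h ℓ (i - 1) - h ℓ i) * (p (i - 1) * μ (i - 1)) -
      ∑ j ∈ Finset.Icc i n, (Ext B n h ℓ j - Ext B n h ℓ (j + 1)) * (μ j * (1 - p j))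

/-- `h : [0,∞) → Ω_B` is a differentiable solution of the ODE system. -/
def IsSolution (B n : ℕ) (μ p : ℕ → ℝ) (f : ℕ → ℕ → (ℕ → ℕ → ℝ) → ℝ)
    (h : ℝ → ℕ → ℕ → ℝ) : Prop :=
  (∀ t : ℝ, 0 ≤ t → MemOmega B n (h t)) ∧
  ∀ ℓ i, 1 ≤ ℓ → ℓ ≤ B → 1 ≤ i → i ≤ n → ∀ t : ℝ, 0 ≤ t →
    HasDerivWithinAt (fun τ => h τ ℓ i) (drift B n μ p f ℓ i (h t)) (Set.Ici 0) t

/-- A fixed point of the ODE system: a state of `Ω_B` at which every drift vanishes. -/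
def IsFixedPoint (B n : ℕ) (μ p : ℕ → ℝ) (f : ℕ → ℕ → (ℕ → ℕ → ℝ) → ℝ)
    (π : ℕ → ℕ → ℝ) : Prop :=
  MemOmega B n π ∧ ∀ ℓ i, 1 ≤ ℓ → ℓ ≤ B → 1 ≤ i → i ≤ n → drift B n μ p f ℓ i π = 0

/-- Assumption A2: each `f_{ℓ,i}` is non-decreasing in every coordinate `(ℓ',i') ≠ (ℓ,i)`. -/
def AssumptionA2 (B n : ℕ) (f : ℕ → ℕ → (ℕ → ℕ → ℝ) → ℝ) : Prop :=
  ∀ ℓ i, 1 ≤ ℓ → ℓ ≤ B → 1 ≤ i → i ≤ n → ∀ h h',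
    MemOmega B n h → MemOmega B n h' →
    (∀ ℓ' i', 1 ≤ ℓ' → ℓ' ≤ B → 1 ≤ i' → i' ≤ n → h ℓ' i' ≤ h' ℓ' i') →
    h ℓ i = h' ℓ i → f ℓ i h ≤ f ℓ i h'

/-- Assumption A3: `f_{(ℓ_1,...,ℓ_n)}` is monotone between `≤_C`-comparable states with
equal `g_{(ℓ_1,...,ℓ_n)}` values. -/
def AssumptionA3 (B n : ℕ) (f : ℕ → ℕ → (ℕ → ℕ → ℝ) → ℝ) : Prop :=
  ∀ L, ValidTuple B n L → ∀ h h', MemOmega B n h → MemOmega B n h' →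
    LeC B n h h' → gfun n L h = gfun n L h' → ffun n f L h ≤ ffun n f L h'

/-- Assumption A4: decomposition of `∑_{ℓ≥L} (f_{ℓ,1}(h) − f_{ℓ,1}(π))` for fixed points `π`. -/
def AssumptionA4 (B n : ℕ) (μ p : ℕ → ℝ) (f : ℕ → ℕ → (ℕ → ℕ → ℝ) → ℝ) : Prop :=
  ∀ π, IsFixedPoint B n μ p f π → ∀ L, 1 ≤ L → L ≤ B →
    ∃ (b : ℕ → ℕ → (ℕ → ℕ → ℝ) → ℝ) (a : (ℕ → ℕ → ℝ) → ℝ),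
      (∀ ℓ j, ∃ M : ℝ, ∀ h, MemOmega B n h → |b ℓ j h| ≤ M) ∧
      (∀ h, MemOmega B n h → LeC B n π h → 0 ≤ a h) ∧
      (∀ h, MemOmega B n h → LeC B n h π → a h ≤ 0) ∧
      (∀ h, MemOmega B n h →
        ∑ ℓ ∈ Finset.Icc L B, (f ℓ 1 h - f ℓ 1 π) =
          ∑ ℓ ∈ Finset.Icc 1 (L - 1), ∑ j ∈ Finset.Icc 1 n,
            b ℓ j h * (h ℓ j - π ℓ j) - a h)

/-! The last inequality in the definition of `Ω_B` says that `h` is supermodular. Hence, for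
`ℓ ≤ ℓ'`, the gap `i ↦ h_{ℓ,i} - h_{ℓ',i}` is nonincreasing in `i`. Bounding each summand by
its value at `i = 1` leaves a telescoping sum equal to `h_{ℓ_n,1} - h_{ℓ_1,1}`. -/

theorem _root_.Finset.sum_Icc_add_one_sub_pred {M : Type*} [AddCommGroup M] (F : ℕ → M)
    {m n : ℕ} (hmn : m ≤ n) : ∑ i ∈ Icc (m + 1) n, (F i - F (i - 1)) = F n - F m := by
  have shift := Finset.sum_Ico_add' (fun i => F i - F (i - 1)) m n 1
  simp only [Nat.add_sub_cancel] at shift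
  rw [← Finset.Ico_add_one_right_eq_Icc, ← shift, Finset.sum_Ico_sub F hmn]

namespace MemOmega

variable {B n : ℕ} {h : ℕ → ℕ → ℝ}

theorem sub_succ_le (hh : MemOmega B n h) {ℓ j : ℕ} (hℓ : 1 ≤ ℓ) (hℓB : ℓ + 1 ≤ B)
    (hj : 1 ≤ j) (hjn : j + 1 ≤ n) :
    h ℓ (j + 1) - h (ℓ + 1) (j + 1) ≤ h ℓ j - h (ℓ + 1) j := by
  have hsup := (hh ℓ j hℓ (by omega) hj (by omega)).2.2.2.2
  simp only [Ext, if_neg (show ℓ + 1 ≠ 0 by omega), if_neg (show ℓ + 1 ≠ B + 1 by omega),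
    if_neg (show ℓ ≠ 0 by omega), if_neg (show ℓ ≠ B + 1 by omega),
    if_neg (show j ≠ n + 1 by omega), if_neg (show j + 1 ≠ n + 1 by omega)] at hsup
  linarith

theorem antitoneOn_sub_succ (hh : MemOmega B n h) {j : ℕ} (hj : 1 ≤ j) (hjn : j + 1 ≤ n) :
    AntitoneOn (fun ℓ => h ℓ j - h ℓ (j + 1)) (Set.Icc 1 B) := by
  refine antitoneOn_of_add_one_le Set.ordConnected_Icc fun ℓ _ hℓ hℓ' => ?_
  have := hh.sub_succ_le hℓ.1 hℓ'.2 hj hjn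
  linarith

theorem antitoneOn_sub (hh : MemOmega B n h) {a b : ℕ} (ha : 1 ≤ a) (hab : a ≤ b)
    (hb : b ≤ B) : AntitoneOn (fun i => h a i - h b i) (Set.Icc 1 n) := by
  refine antitoneOn_of_add_one_le Set.ordConnected_Icc fun j _ hj hj' => ?_
  have := hh.antitoneOn_sub_succ hj.1 hj'.2 ⟨ha, hab.trans hb⟩ ⟨ha.trans hab, hb⟩ hab
  linarith

end MemOmega

theorem stmt12_general (B n : ℕ) (hn : 1 ≤ n) (h : ℕ → ℕ → ℝ)
    (hh : MemOmega B n h) (L : ℕ → ℕ)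
    (hL : ∀ i, 1 ≤ i → i ≤ n → 1 ≤ L i ∧ L i ≤ B)
    (hmono : ∀ i, 2 ≤ i → i ≤ n → L i ≤ L (i - 1)) :
    h (L 1) 1 + ∑ i ∈ Finset.Icc 2 n, (h (L i) i - h (L (i - 1)) i) ≤ h (L n) 1 := by
  calc h (L 1) 1 + ∑ i ∈ Icc 2 n, (h (L i) i - h (L (i - 1)) i)
      ≤ h (L 1) 1 + ∑ i ∈ Icc 2 n, (h (L i) 1 - h (L (i - 1)) 1) := by
        gcongr _ + ∑ i ∈ _, ?_ with i hi
        obtain ⟨hi2, hin⟩ := Finset.mem_Icc.mp hi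
        exact hh.antitoneOn_sub (hL i (by omega) hin).1 (hmono i hi2 hin)
          (hL (i - 1) (by omega) (by omega)).2 ⟨le_rfl, hn⟩ ⟨by omega, hin⟩ (by omega)
    _ = h (L n) 1 := by
        rw [Finset.sum_Icc_add_one_sub_pred (fun i => h (L i) 1) hn]
        ring

/-- Inequality (10) of the paper: for any state `h ∈ Ω_B` and any nonincreasing tuple
`B ≥ ℓ_1 ≥ ... ≥ ℓ_n ≥ 1`,
`h_{ℓ_1,1} + ∑_{i=2}^n (h_{ℓ_i,i} − h_{ℓ_{i−1},i}) ≤ h_{ℓ_n,1}`. -/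
theorem stmt12 (B n : ℕ) (hB : 1 ≤ B) (hn : 1 ≤ n) (h : ℕ → ℕ → ℝ)
    (hh : MemOmega B n h) (L : ℕ → ℕ)
    (hL : ∀ i, 1 ≤ i → i ≤ n → 1 ≤ L i ∧ L i ≤ B)
    (hmono : ∀ i, 2 ≤ i → i ≤ n → L i ≤ L (i - 1)) :
    h (L 1) 1 + ∑ i ∈ Finset.Icc 2 n, (h (L i) i - h (L (i - 1)) i) ≤ h (L n) 1 :=
  stmt12_general B n hn h hh L hL hmono

end MeanField
end

section
/- For any h, π ∈ Ω_B there exist h^{(l)}, h^{(u)} ∈ Ω_B such that h^{(l)} ≤_C h, h^{(l)} ≤_C π, h ≤_C h^{(u)} and π ≤_C h^{(u)}. In particular one may take h^{(l)} := 0 and h^{(u)}_{ℓ,i} := max(h_{ℓ,1}, π_{ℓ,1}) for all i. -/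
/-!
The zero state lies `≤_C`-below every state of `Ω_B`, and the state that is constant along
each row with value `max(h_{ℓ,1}, π_{ℓ,1})` lies above both `h` and `π`. For a state constant
along rows, `g_{(ℓ_1,...,ℓ_n)}` telescopes to its value in row `ℓ_n`. For a general state,
monotonicity in `ℓ` makes every increment `h_{ℓ_i,i} − h_{ℓ_{i−1},i}` nonnegative, and
supermodularity bounds it by the same increment in column `1`, so `0 ≤ g(h) ≤ h_{ℓ_n,1}`.
-/

open Finset

namespace MeanField

lemma ext_of_mem {B n : ℕ} (h : ℕ → ℕ → ℝ) {ℓ i : ℕ} (hℓ₁ : 1 ≤ ℓ) (hℓB : ℓ ≤ B)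
    (hin : i ≤ n) : Ext B n h ℓ i = h ℓ i := by
  simp only [Ext]
  rw [if_neg (by omega), if_neg (by omega), if_neg (by omega)]

namespace MemOmega

variable {B n : ℕ} {x : ℕ → ℕ → ℝ}

lemma nonneg (hx : MemOmega B n x) {ℓ i : ℕ} (hℓ : ℓ ∈ Set.Icc 1 B) (hi : i ∈ Set.Icc 1 n) :
    0 ≤ x ℓ i :=
  (hx ℓ i hℓ.1 hℓ.2 hi.1 hi.2).1

lemma le_one (hx : MemOmega B n x) {ℓ i : ℕ} (hℓ : ℓ ∈ Set.Icc 1 B) (hi : i ∈ Set.Icc 1 n) :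
    x ℓ i ≤ 1 :=
  (hx ℓ i hℓ.1 hℓ.2 hi.1 hi.2).2.1

lemma antitoneOn_col (hx : MemOmega B n x) {i : ℕ} (hi : i ∈ Set.Icc 1 n) :
    AntitoneOn (fun ℓ => x ℓ i) (Set.Icc 1 B) := by
  refine antitoneOn_of_succ_le Set.ordConnected_Icc fun ℓ _ hℓ hℓ' => ?_
  rw [Order.succ_eq_add_one] at hℓ' ⊢
  have step := (hx ℓ i hℓ.1 hℓ.2 hi.1 hi.2).2.2.2.1
  rwa [ext_of_mem x (by omega) hℓ'.2 hi.2] at step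

lemma antitoneOn_row (hx : MemOmega B n x) {ℓ : ℕ} (hℓ : ℓ ∈ Set.Icc 1 B) :
    AntitoneOn (fun i => x ℓ i) (Set.Icc 1 n) := by
  refine antitoneOn_of_succ_le Set.ordConnected_Icc fun i _ hi hi' => ?_
  rw [Order.succ_eq_add_one] at hi' ⊢
  have step := (hx ℓ i hℓ.1 hℓ.2 hi.1 hi.2).2.2.1
  rwa [ext_of_mem x hℓ.1 hℓ.2 hi'.2] at step

lemma antitoneOn_sub_succ_s13 (hx : MemOmega B n x) {i : ℕ} (hi : 1 ≤ i) (hin : i < n) :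
    AntitoneOn (fun ℓ => x ℓ i - x ℓ (i + 1)) (Set.Icc 1 B) := by
  refine antitoneOn_of_succ_le Set.ordConnected_Icc fun ℓ _ hℓ hℓ' => ?_
  rw [Order.succ_eq_add_one] at hℓ' ⊢
  have step := (hx ℓ i hℓ.1 hℓ.2 hi hin.le).2.2.2.2
  rw [ext_of_mem x (by omega) hℓ'.2 hin.le, ext_of_mem x hℓ.1 hℓ.2 hin,
    ext_of_mem x (by omega) hℓ'.2 hin] at step
  linarith

lemma antitoneOn_sub_col (hx : MemOmega B n x) {a b : ℕ} (ha : a ∈ Set.Icc 1 B)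
    (hb : b ∈ Set.Icc 1 B) (hab : a ≤ b) :
    AntitoneOn (fun i => x a i - x b i) (Set.Icc 1 n) := by
  refine antitoneOn_of_succ_le Set.ordConnected_Icc fun i _ hi hi' => ?_
  rw [Order.succ_eq_add_one] at hi' ⊢
  have := hx.antitoneOn_sub_succ_s13 hi.1 hi'.2 ha hb hab
  dsimp only at this ⊢
  linarith

end MemOmega

lemma sum_Icc_two_sub_pred (v : ℕ → ℝ) {n : ℕ} (hn : 1 ≤ n) :
    ∑ i ∈ Finset.Icc 2 n, (v i - v (i - 1)) = v n - v 1 := by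
  induction n, hn using Nat.le_induction with
  | base => simp
  | succ n hn ih =>
    rw [Finset.sum_Icc_succ_top (by omega), ih, Nat.add_sub_cancel]
    ring

section RowConst

variable {B n : ℕ}

lemma ext_rowConst (c : ℕ → ℝ) {ℓ i : ℕ} (hℓ : 1 ≤ ℓ) :
    Ext B n (fun ℓ _ => c ℓ) ℓ i = if ℓ = B + 1 ∨ i = n + 1 then 0 else c ℓ := by
  simp only [Ext, if_neg (by omega : ℓ ≠ 0)]
  split_ifs <;> simp_all

lemma memOmega_rowConst (c : ℕ → ℝ) (hc : ∀ ℓ ∈ Set.Icc 1 B, 0 ≤ c ℓ ∧ c ℓ ≤ 1)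
    (hanti : AntitoneOn c (Set.Icc 1 B)) : MemOmega B n (fun ℓ _ => c ℓ) := by
  intro ℓ i hℓ₁ hℓB hi₁ hin
  obtain ⟨h0, h1⟩ := hc ℓ ⟨hℓ₁, hℓB⟩
  rw [ext_rowConst c hℓ₁, ext_rowConst c (by omega), ext_rowConst c (by omega)]
  have hsucc : ℓ < B → c (ℓ + 1) ≤ c ℓ := fun hℓB =>
    hanti ⟨hℓ₁, hℓB.le⟩ ⟨by omega, hℓB⟩ (by omega)
  refine ⟨h0, h1, ?_⟩
  split_ifs <;> refine ⟨?_, ?_, ?_⟩ <;> first | omega | linarith | linarith [hsucc (by omega)]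

lemma gfun_rowConst (hn : 1 ≤ n) (L : ℕ → ℕ) (c : ℕ → ℝ) :
    gfun n L (fun ℓ _ => c ℓ) = c (L n) := by
  have := sum_Icc_two_sub_pred (fun i => c (L i)) hn
  simp only [gfun] at this ⊢
  linarith

end RowConst

namespace MemOmega

variable {B n : ℕ} {x : ℕ → ℕ → ℝ} {L : ℕ → ℕ}

lemma gfun_nonneg (hx : MemOmega B n x) (hn : 1 ≤ n) (hL : ValidTuple B n L) :
    0 ≤ gfun n L x := by
  obtain ⟨hL_mem, hL_anti, -⟩ := hL
  have hfirst : 0 ≤ x (L 1) 1 := hx.nonneg (hL_mem 1 le_rfl hn) ⟨le_rfl, hn⟩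
  have hterms : 0 ≤ ∑ i ∈ Finset.Icc 2 n, (x (L i) i - x (L (i - 1)) i) := by
    refine Finset.sum_nonneg fun i hi => ?_
    obtain ⟨hi₂, hin⟩ := Finset.mem_Icc.mp hi
    have := hx.antitoneOn_col ⟨by omega, hin⟩ (hL_mem i (by omega) hin)
      (hL_mem (i - 1) (by omega) (by omega)) (hL_anti i hi₂ hin)
    exact sub_nonneg.mpr this
  exact add_nonneg hfirst hterms

lemma gfun_le (hx : MemOmega B n x) (hn : 1 ≤ n) (hL : ValidTuple B n L) :
    gfun n L x ≤ x (L n) 1 := by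
  obtain ⟨hL_mem, hL_anti, -⟩ := hL
  calc gfun n L x ≤ gfun n L (fun ℓ _ => x ℓ 1) := by
        refine add_le_add_right (Finset.sum_le_sum fun i hi => ?_) _
        obtain ⟨hi₂, hin⟩ := Finset.mem_Icc.mp hi
        have := hx.antitoneOn_sub_col (hL_mem i (by omega) hin)
          (hL_mem (i - 1) (by omega) (by omega)) (hL_anti i hi₂ hin) ⟨le_rfl, hn⟩
          ⟨by omega, hin⟩ (by omega)
        dsimp only at this ⊢
        linarith
    _ = x (L n) 1 := gfun_rowConst hn L fun ℓ => x ℓ 1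

end MemOmega

section LeC

variable {B n : ℕ} {x : ℕ → ℕ → ℝ}

lemma zero_leC (hn : 1 ≤ n) (hx : MemOmega B n x) : LeC B n (fun _ _ => 0) x :=
  ⟨fun _ _ hℓ₁ hℓB hi₁ hin => hx.nonneg ⟨hℓ₁, hℓB⟩ ⟨hi₁, hin⟩, fun L hL =>
    (gfun_rowConst hn L 0).trans_le (hx.gfun_nonneg hn hL)⟩

lemma leC_rowConst (hn : 1 ≤ n) (hx : MemOmega B n x) (c : ℕ → ℝ)
    (hc : ∀ ℓ ∈ Set.Icc 1 B, x ℓ 1 ≤ c ℓ) : LeC B n x (fun ℓ _ => c ℓ) := by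
  refine ⟨fun ℓ i hℓ₁ hℓB hi₁ hin => ?_, fun L hL => ?_⟩
  · exact (hx.antitoneOn_row ⟨hℓ₁, hℓB⟩ ⟨le_rfl, hn⟩ ⟨hi₁, hin⟩ hi₁).trans
      (hc ℓ ⟨hℓ₁, hℓB⟩)
  · rw [gfun_rowConst hn]
    exact (hx.gfun_le hn hL).trans (hc (L n) (hL.1 n hn le_rfl))

end LeC

theorem stmt13_general (B n : ℕ) (hn : 1 ≤ n) (h π : ℕ → ℕ → ℝ)
    (hh : MemOmega B n h) (hπ : MemOmega B n π) :
    ∃ hl hu : ℕ → ℕ → ℝ, MemOmega B n hl ∧ MemOmega B n hu ∧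
      LeC B n hl h ∧ LeC B n hl π ∧ LeC B n h hu ∧ LeC B n π hu := by
  have h₁ : 1 ∈ Set.Icc 1 n := ⟨le_rfl, hn⟩
  let c : ℕ → ℝ := fun ℓ => max (h ℓ 1) (π ℓ 1)
  have hc_bounds : ∀ ℓ ∈ Set.Icc 1 B, 0 ≤ c ℓ ∧ c ℓ ≤ 1 := fun ℓ hℓ =>
    ⟨le_max_of_le_left (hh.nonneg hℓ h₁), max_le (hh.le_one hℓ h₁) (hπ.le_one hℓ h₁)⟩
  have hc_anti : AntitoneOn c (Set.Icc 1 B) := fun a ha b hb hab =>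
    max_le_max (hh.antitoneOn_col h₁ ha hb hab) (hπ.antitoneOn_col h₁ ha hb hab)
  refine ⟨fun _ _ => 0, fun ℓ _ => c ℓ,
    memOmega_rowConst 0 (fun _ _ => ⟨le_rfl, zero_le_one⟩) antitoneOn_const,
    memOmega_rowConst c hc_bounds hc_anti, zero_leC hn hh, zero_leC hn hπ, ?_, ?_⟩
  · exact leC_rowConst hn hh c fun _ _ => le_max_left _ _
  · exact leC_rowConst hn hπ c fun _ _ => le_max_right _ _

/-- Bracketing step in Proposition 7 of the paper: any `h, π ∈ Ω_B` admit a common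
`≤_C`-lower bound and a common `≤_C`-upper bound in `Ω_B` (one may take `h^{(l)} = 0`
and `h^{(u)}_{ℓ,i} = max(h_{ℓ,1}, π_{ℓ,1})`). -/
theorem stmt13 (B n : ℕ) (hB : 1 ≤ B) (hn : 1 ≤ n) (h π : ℕ → ℕ → ℝ)
    (hh : MemOmega B n h) (hπ : MemOmega B n π) :
    ∃ hl hu : ℕ → ℕ → ℝ, MemOmega B n hl ∧ MemOmega B n hu ∧
      LeC B n hl h ∧ LeC B n hl π ∧ LeC B n h hu ∧ LeC B n π hu :=
  stmt13_general B n hn h π hh hπ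

end MeanField
end

section
/- Assume the unit-mean condition ∑_{j=1}^n (∏_{s=1}^{j−1} p_s)/μ_j = 1, and define R_n := 1/μ_n and R_{i−1} := 1/μ_{i−1} + p_{i−1} R_i for i = n,...,2 (so that R_1 = 1). Let h : [0,∞) → Ω_B be a differentiable solution of the ODE system and define z_{1,L}(h) := ∑_{ℓ=L}^B h_{ℓ,1} (for 1 ≤ L ≤ B) and z_2(h) := ∑_{i=2}^n h_{1,i} (R_i − R_{i−1}). Then for all t ≥ 0: (d/dt) z_{1,L}(h(t)) = ∑_{ℓ=L}^B f_{ℓ,1}(h(t)) − ∑_{j=1}^n (h_{L,j}(t) − h_{L,j+1}(t)) ν_j, and (d/dt) z_2(h(t)) = −h_{1,1}(t) + ∑_{j=1}^n (h_{1,j}(t) − h_{1,j+1}(t)) ν_j. -/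
open Finset

namespace MeanField

/-!
Summing the level-one equations over `ℓ ≥ L` telescopes in `ℓ`, and the boundary level
`B + 1` contributes nothing. For `z₂`, write `d_j = h_{1,j} − h_{1,j+1}` and `ν_j = μ_j (1 − p_j)`.
The recursion for `R` gives `p_k μ_k (R_{k+1} − R_k) = ν_k R_k − 1` for `1 ≤ k ≤ n` (at `k = n`
because `p_n = 0`), summation by parts turns the tail sums `∑_{j ≥ i} d_j ν_j` weighted by
`R_i − R_{i−1}` into `∑_j d_j ν_j (R_j − R_1)`, and the unit-mean condition says `R_1 = 1`.
What is left is `∑_j d_j (ν_j − 1) = ∑_j d_j ν_j − h_{1,1}`.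
-/

lemma Ext_of_le {B n : ℕ} {x : ℕ → ℕ → ℝ} {ℓ i : ℕ} (hℓ : 1 ≤ ℓ) (hℓB : ℓ ≤ B) (hi : i ≤ n) :
    Ext B n x ℓ i = x ℓ i := by
  simp only [Ext]
  rw [if_neg (by omega), if_neg (by omega), if_neg (by omega)]

lemma Ext_succ_right {B n : ℕ} {x : ℕ → ℕ → ℝ} {ℓ : ℕ} (hℓ : ℓ ≠ 0) :
    Ext B n x ℓ (n + 1) = 0 := by
  simp [Ext, hℓ]

lemma Ext_succ_bottom {B n : ℕ} {x : ℕ → ℕ → ℝ} (i : ℕ) : Ext B n x (B + 1) i = 0 := by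
  simp [Ext]

lemma sum_Icc_sub_succ (F : ℕ → ℝ) {a b : ℕ} (hab : a ≤ b) :
    ∑ i ∈ Icc a b, (F i - F (i + 1)) = F a - F (b + 1) := by
  rw [← neg_sub (F (b + 1)), ← sum_Icc_sub hab, ← sum_neg_distrib]
  simp only [neg_sub]

lemma sum_Ico_sum_Icc_mul_sub (a c : ℕ → ℝ) (n : ℕ) :
    ∑ k ∈ Ico 1 n, (∑ j ∈ Icc (k + 1) n, a j) * (c (k + 1) - c k) =
      ∑ j ∈ Icc 1 n, a j * (c j - c 1) := by
  simp_rw [sum_mul]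
  rw [sum_comm' (t' := Icc 1 n) (s' := fun j => Ico 1 j)
    (by intro k j; simp only [mem_Ico, mem_Icc]; omega)]
  refine sum_congr rfl fun j hj => ?_
  rw [← mul_sum, sum_Ico_sub c (mem_Icc.mp hj).1]

section

variable {n : ℕ} {μ p R : ℕ → ℝ}

lemma sum_Icc_prod_div_eq_prod_mul (hμ : ∀ i, 1 ≤ i → i ≤ n → 0 < μ i)
    (hRn : R n = 1 / μ n)
    (hRrec : ∀ i, 2 ≤ i → i ≤ n → R (i - 1) = 1 / μ (i - 1) + p (i - 1) * R i)
    {i : ℕ} (hi : 1 ≤ i) (hin : i ≤ n) :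
    ∑ j ∈ Icc i n, (∏ s ∈ Icc 1 (j - 1), p s) / μ j =
      (∏ s ∈ Icc 1 (i - 1), p s) * R i := by
  induction hin using Nat.decreasingInduction with
  | self => rw [Icc_self, sum_singleton, hRn, mul_one_div]
  | of_succ k hk ih =>
    obtain ⟨m, rfl⟩ : ∃ m, k = m + 1 := ⟨k - 1, by omega⟩
    have hμk : μ (m + 1) ≠ 0 := (hμ (m + 1) hi hk.le).ne'
    have hR : R (m + 1) = 1 / μ (m + 1) + p (m + 1) * R (m + 2) := hRrec (m + 2) (by omega) hk
    rw [Icc_eq_cons_Ioc hk.le, sum_cons, ← Icc_add_one_left_eq_Ioc, ih (by omega),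
      Nat.add_sub_cancel, Nat.add_sub_cancel, prod_Icc_succ_top (by omega), hR]
    field_simp

lemma R_one_eq_one (hn : 1 ≤ n) (hμ : ∀ i, 1 ≤ i → i ≤ n → 0 < μ i)
    (hmean : ∑ j ∈ Icc 1 n, (∏ s ∈ Icc 1 (j - 1), p s) / μ j = 1)
    (hRn : R n = 1 / μ n)
    (hRrec : ∀ i, 2 ≤ i → i ≤ n → R (i - 1) = 1 / μ (i - 1) + p (i - 1) * R i) :
    R 1 = 1 := by
  simpa [hmean] using (sum_Icc_prod_div_eq_prod_mul hμ hRn hRrec le_rfl hn).symm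

lemma mul_R_succ_sub (hμ : ∀ i, 1 ≤ i → i ≤ n → 0 < μ i) (hpn : p n = 0)
    (hRn : R n = 1 / μ n)
    (hRrec : ∀ i, 2 ≤ i → i ≤ n → R (i - 1) = 1 / μ (i - 1) + p (i - 1) * R i)
    {k : ℕ} (hk : 1 ≤ k) (hkn : k ≤ n) :
    p k * μ k * (R (k + 1) - R k) = μ k * (1 - p k) * R k - 1 := by
  have hμk : μ k ≠ 0 := (hμ k hk hkn).ne'
  rcases hkn.lt_or_eq with hkn | rfl
  · have hR : R k = 1 / μ k + p k * R (k + 1) := hRrec (k + 1) (by omega) hkn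
    rw [hR]
    field_simp
    ring
  · rw [hpn, hRn]
    field_simp
    ring

end

section

variable {B n : ℕ} {μ p : ℕ → ℝ} {f : ℕ → ℕ → (ℕ → ℕ → ℝ) → ℝ} {x : ℕ → ℕ → ℝ}

lemma sum_drift_one {L : ℕ} (hLB : L ≤ B) :
    ∑ ℓ ∈ Icc L B, drift B n μ p f ℓ 1 x =
      ∑ ℓ ∈ Icc L B, f ℓ 1 x -
        ∑ j ∈ Icc 1 n, (Ext B n x L j - Ext B n x L (j + 1)) * (μ j * (1 - p j)) := by
  set E : ℕ → ℝ := fun ℓ =>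
    ∑ j ∈ Icc 1 n, (Ext B n x ℓ j - Ext B n x ℓ (j + 1)) * (μ j * (1 - p j)) with hE
  have hdrift : ∀ ℓ ∈ Icc L B, drift B n μ p f ℓ 1 x = f ℓ 1 x - (E ℓ - E (ℓ + 1)) := by
    intro ℓ _
    simp only [drift, if_true, hE, ← sum_sub_distrib, sub_mul]
  have hE_bottom : E (B + 1) = 0 := by simp [hE, Ext_succ_bottom]
  rw [sum_congr rfl hdrift, sum_sub_distrib, sum_Icc_sub_succ E hLB, hE_bottom, sub_zero]

lemma drift_one_succ (hB : 1 ≤ B) {k : ℕ} (hk : 1 ≤ k) (hkn : k < n) :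
    drift B n μ p f 1 (k + 1) x =
      (Ext B n x 1 k - Ext B n x 1 (k + 1)) * (p k * μ k) -
        ∑ j ∈ Icc (k + 1) n, (Ext B n x 1 j - Ext B n x 1 (j + 1)) * (μ j * (1 - p j)) := by
  rw [Ext_of_le le_rfl hB hkn.le, Ext_of_le le_rfl hB hkn]
  simp [drift, show k ≠ 0 by omega]

lemma sum_drift_mul_sub_R {R : ℕ → ℝ} (hB : 1 ≤ B) (hn : 1 ≤ n)
    (hμ : ∀ i, 1 ≤ i → i ≤ n → 0 < μ i) (hpn : p n = 0)
    (hmean : ∑ j ∈ Icc 1 n, (∏ s ∈ Icc 1 (j - 1), p s) / μ j = 1)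
    (hRn : R n = 1 / μ n)
    (hRrec : ∀ i, 2 ≤ i → i ≤ n → R (i - 1) = 1 / μ (i - 1) + p (i - 1) * R i) :
    ∑ i ∈ Icc 2 n, drift B n μ p f 1 i x * (R i - R (i - 1)) =
      -x 1 1 + ∑ j ∈ Icc 1 n, (Ext B n x 1 j - Ext B n x 1 (j + 1)) * (μ j * (1 - p j)) := by
  set d : ℕ → ℝ := fun j => Ext B n x 1 j - Ext B n x 1 (j + 1)
  set ν : ℕ → ℝ := fun j => μ j * (1 - p j)
  have hshift : ∑ i ∈ Icc 2 n, drift B n μ p f 1 i x * (R i - R (i - 1)) =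
      ∑ k ∈ Ico 1 n, drift B n μ p f 1 (k + 1) x * (R (k + 1) - R k) := by
    rw [← Ico_add_one_right_eq_Icc]
    exact (sum_Ico_add' (fun i => drift B n μ p f 1 i x * (R i - R (i - 1))) 1 n 1).symm
  have hextend : ∑ k ∈ Ico 1 n, d k * (p k * μ k * (R (k + 1) - R k)) =
      ∑ k ∈ Icc 1 n, d k * (ν k * R k - 1) := by
    have hterm : ∀ k ∈ Icc 1 n, d k * (ν k * R k - 1) = d k * (p k * μ k * (R (k + 1) - R k)) :=
      fun k hk => by rw [mul_R_succ_sub hμ hpn hRn hRrec (mem_Icc.mp hk).1 (mem_Icc.mp hk).2]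
    rw [sum_congr rfl hterm, ← Ico_add_one_right_eq_Icc, sum_Ico_succ_top hn, hpn]
    simp only [zero_mul, mul_zero, add_zero]
  calc ∑ i ∈ Icc 2 n, drift B n μ p f 1 i x * (R i - R (i - 1))
      = ∑ k ∈ Ico 1 n, d k * (p k * μ k * (R (k + 1) - R k)) -
          ∑ k ∈ Ico 1 n, (∑ j ∈ Icc (k + 1) n, d j * ν j) * (R (k + 1) - R k) := by
        rw [hshift, ← sum_sub_distrib]
        refine sum_congr rfl fun k hk => ?_
        rw [mem_Ico] at hk
        rw [drift_one_succ hB hk.1 hk.2]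
        ring
    _ = ∑ k ∈ Icc 1 n, (d k * (ν k * R k - 1) - d k * ν k * (R k - 1)) := by
        rw [hextend, sum_Ico_sum_Icc_mul_sub, R_one_eq_one hn hμ hmean hRn hRrec, sum_sub_distrib]
    _ = -(∑ k ∈ Icc 1 n, d k) + ∑ k ∈ Icc 1 n, d k * ν k := by
        rw [← sum_neg_distrib, ← sum_add_distrib]
        exact sum_congr rfl fun k _ => by ring
    _ = -x 1 1 + ∑ j ∈ Icc 1 n, d j * ν j := by
        rw [sum_Icc_sub_succ _ hn, Ext_of_le le_rfl hB hn, Ext_succ_right one_ne_zero, sub_zero]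

end

theorem stmt14_general (B n : ℕ) (hB : 1 ≤ B) (hn : 1 ≤ n) (μ p R : ℕ → ℝ)
    (hμ : ∀ i, 1 ≤ i → i ≤ n → 0 < μ i)
    (hpn : p n = 0)
    (hmean : ∑ j ∈ Finset.Icc 1 n, (∏ s ∈ Finset.Icc 1 (j - 1), p s) / μ j = 1)
    (hRn : R n = 1 / μ n)
    (hRrec : ∀ i, 2 ≤ i → i ≤ n → R (i - 1) = 1 / μ (i - 1) + p (i - 1) * R i)
    (f : ℕ → ℕ → (ℕ → ℕ → ℝ) → ℝ)
    (h : ℝ → ℕ → ℕ → ℝ) (hsol : IsSolution B n μ p f h) :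
    ∀ t : ℝ, 0 ≤ t →
      (∀ L, 1 ≤ L → L ≤ B →
        HasDerivWithinAt (fun τ => ∑ ℓ ∈ Finset.Icc L B, h τ ℓ 1)
          (∑ ℓ ∈ Finset.Icc L B, f ℓ 1 (h t) -
            ∑ j ∈ Finset.Icc 1 n,
              (Ext B n (h t) L j - Ext B n (h t) L (j + 1)) * (μ j * (1 - p j)))
          (Set.Ici 0) t) ∧
      HasDerivWithinAt (fun τ => ∑ i ∈ Finset.Icc 2 n, h τ 1 i * (R i - R (i - 1)))
        (-(h t 1 1) +
          ∑ j ∈ Finset.Icc 1 n,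
            (Ext B n (h t) 1 j - Ext B n (h t) 1 (j + 1)) * (μ j * (1 - p j)))
        (Set.Ici 0) t := by
  intro t ht
  have hODE := hsol.2
  refine ⟨fun L hL hLB => ?_, ?_⟩
  · rw [← sum_drift_one hLB]
    refine HasDerivWithinAt.fun_sum fun ℓ hℓ => ?_
    obtain ⟨hLℓ, hℓB⟩ := mem_Icc.mp hℓ
    exact hODE ℓ 1 (hL.trans hLℓ) hℓB le_rfl hn t ht
  · rw [← sum_drift_mul_sub_R hB hn hμ hpn hmean hRn hRrec]
    refine HasDerivWithinAt.fun_sum fun i hi => ?_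
    obtain ⟨h2i, hin⟩ := mem_Icc.mp hi
    exact (hODE 1 i le_rfl hB (one_le_two.trans h2i) hin t ht).mul_const _

/-- Lemma 3 of the paper: derivatives of the Lyapunov-type quantities
`z_{1,L}(h) = ∑_{ℓ=L}^B h_{ℓ,1}` and `z_2(h) = ∑_{i=2}^n h_{1,i} (R_i − R_{i−1})`
along any solution of the ODE system. -/
theorem stmt14 (B n : ℕ) (hB : 1 ≤ B) (hn : 1 ≤ n) (μ p R : ℕ → ℝ)
    (hμ : ∀ i, 1 ≤ i → i ≤ n → 0 < μ i)
    (hp : ∀ i, 1 ≤ i → i < n → 0 < p i ∧ p i < 1)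
    (hpn : p n = 0)
    (hmean : ∑ j ∈ Finset.Icc 1 n, (∏ s ∈ Finset.Icc 1 (j - 1), p s) / μ j = 1)
    (hRn : R n = 1 / μ n)
    (hRrec : ∀ i, 2 ≤ i → i ≤ n → R (i - 1) = 1 / μ (i - 1) + p (i - 1) * R i)
    (f : ℕ → ℕ → (ℕ → ℕ → ℝ) → ℝ)
    (h : ℝ → ℕ → ℕ → ℝ) (hsol : IsSolution B n μ p f h) :
    ∀ t : ℝ, 0 ≤ t →
      (∀ L, 1 ≤ L → L ≤ B →
        HasDerivWithinAt (fun τ => ∑ ℓ ∈ Finset.Icc L B, h τ ℓ 1)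
          (∑ ℓ ∈ Finset.Icc L B, f ℓ 1 (h t) -
            ∑ j ∈ Finset.Icc 1 n,
              (Ext B n (h t) L j - Ext B n (h t) L (j + 1)) * (μ j * (1 - p j)))
          (Set.Ici 0) t) ∧
      HasDerivWithinAt (fun τ => ∑ i ∈ Finset.Icc 2 n, h τ 1 i * (R i - R (i - 1)))
        (-(h t 1 1) +
          ∑ j ∈ Finset.Icc 1 n,
            (Ext B n (h t) 1 j - Ext B n (h t) 1 (j + 1)) * (μ j * (1 - p j)))
        (Set.Ici 0) t :=
  stmt14_general B n hB hn μ p R hμ hpn hmean hRn hRrec f h hsol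

end MeanField
end

section
/- Let 1 ≤ K ≤ d be integers and define φ_K(x) := ∑_{s=0}^{K−1} (K−s) C(d,s) x^{d−s} (1−x)^s. Then for every real x, the derivative of φ_K satisfies φ_K'(x) = ∑_{s=0}^{K−1} d C(d−1,s) x^{d−s−1} (1−x)^s. In particular φ_K'(x) ≥ 0 for x ∈ [0,1], so φ_K is nondecreasing on [0,1]. -/
/-!
Write `b_s(x) = C(d,s) x^(d-s) (1-x)^s`. Since `K - s` counts the `k < K` with `s ≤ k`,
`φ_K` is the sum over `k < K` of the partial sums `F_k = ∑_{s ≤ k} b_s`. By the two absorption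
identities for binomial coefficients, the derivative of `F_k` telescopes to the single term
`d C(d-1,k) x^(d-k-1) (1-x)^k`, which is nonnegative on `[0,1]`.
-/

open Finset

namespace Nat

theorem choose_succ_mul_succ (d n : ℕ) : d.choose (n + 1) * (n + 1) = d * (d - 1).choose n := by
  cases d with
  | zero => simp
  | succ m => simpa using (add_one_mul_choose_eq m n).symm

theorem choose_succ_mul_sub_succ (d n : ℕ) :
    d.choose (n + 1) * (d - (n + 1)) = d * (d - 1).choose (n + 1) := by
  cases d with
  | zero => simp
  | succ m => simpa [mul_comm] using (choose_mul_succ_eq m (n + 1)).symm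

end Nat

theorem Finset.sum_range_sum_range_succ {R : Type*} [CommRing R] (f : ℕ → R) (n : ℕ) :
    ∑ k ∈ range n, ∑ s ∈ range (k + 1), f s = ∑ s ∈ range n, ((n : R) - s) * f s := by
  induction n with
  | zero => simp
  | succ n ih =>
    rw [sum_range_succ, ih, sum_range_succ _ n,
      sum_range_succ (fun s => (((n + 1 : ℕ) : R) - s) * f s), ← add_assoc, ← sum_add_distrib]
    push_cast
    congr 1
    · exact sum_congr rfl fun s _ => by ring
    · ring

theorem hasDerivAt_sum_range_choose_mul_pow_mul_one_sub_pow (d n : ℕ) (x : ℝ) :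
    HasDerivAt
      (fun y : ℝ => ∑ s ∈ range (n + 1), (d.choose s : ℝ) * y ^ (d - s) * (1 - y) ^ s)
      ((d : ℝ) * ((d - 1).choose n : ℝ) * x ^ (d - n - 1) * (1 - x) ^ n) x := by
  induction n with
  | zero => simpa using hasDerivAt_pow d x
  | succ n ih =>
    simp only [sum_range_succ _ (n + 1)]
    have hterm := ((hasDerivAt_pow (d - (n + 1)) x).const_mul (d.choose (n + 1) : ℝ)).mul
      (((hasDerivAt_id x).const_sub 1).fun_pow (n + 1))
    refine (ih.add hterm).congr_deriv ?_
    have h₁ := congrArg (Nat.cast : ℕ → ℝ) (Nat.choose_succ_mul_succ d n)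
    have h₂ := congrArg (Nat.cast : ℕ → ℝ) (Nat.choose_succ_mul_sub_succ d n)
    push_cast at h₁ h₂ ⊢
    simp only [id, Nat.sub_sub d n 1]
    linear_combination
      x ^ (d - (n + 1) - 1) * (1 - x) ^ (n + 1) * h₂ - x ^ (d - (n + 1)) * (1 - x) ^ n * h₁

theorem hasDerivAt_sum_range_sub_mul_choose_mul_pow_mul_one_sub_pow (K d : ℕ) (x : ℝ) :
    HasDerivAt (fun y : ℝ => ∑ s ∈ range K,
        ((K : ℝ) - s) * (d.choose s : ℝ) * y ^ (d - s) * (1 - y) ^ s)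
      (∑ s ∈ range K, (d : ℝ) * ((d - 1).choose s : ℝ) * x ^ (d - s - 1) * (1 - x) ^ s) x := by
  have h := HasDerivAt.fun_sum (u := range K) fun k _ =>
    hasDerivAt_sum_range_choose_mul_pow_mul_one_sub_pow d k x
  refine h.congr_of_eventuallyEq (Filter.Eventually.of_forall fun y => ?_)
  simp only [sum_range_sum_range_succ, mul_assoc]

theorem stmt17_general (K d : ℕ) :
    (∀ x : ℝ,
      HasDerivAt (fun y : ℝ => ∑ s ∈ Finset.range K,
          ((K : ℝ) - s) * (d.choose s : ℝ) * y ^ (d - s) * (1 - y) ^ s)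
        (∑ s ∈ Finset.range K,
          (d : ℝ) * ((d - 1).choose s : ℝ) * x ^ (d - s - 1) * (1 - x) ^ s) x) ∧
    (∀ x ∈ Set.Icc (0 : ℝ) 1,
      0 ≤ ∑ s ∈ Finset.range K,
          (d : ℝ) * ((d - 1).choose s : ℝ) * x ^ (d - s - 1) * (1 - x) ^ s) ∧
    MonotoneOn (fun y : ℝ => ∑ s ∈ Finset.range K,
        ((K : ℝ) - s) * (d.choose s : ℝ) * y ^ (d - s) * (1 - y) ^ s)
      (Set.Icc (0 : ℝ) 1) := by
  have hderiv := hasDerivAt_sum_range_sub_mul_choose_mul_pow_mul_one_sub_pow K d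
  have hnonneg : ∀ x ∈ Set.Icc (0 : ℝ) 1, 0 ≤ ∑ s ∈ Finset.range K,
      (d : ℝ) * ((d - 1).choose s : ℝ) * x ^ (d - s - 1) * (1 - x) ^ s := by
    rintro x ⟨hx₀, hx₁⟩
    have : 0 ≤ 1 - x := sub_nonneg.2 hx₁
    exact sum_nonneg fun s _ => by positivity
  refine ⟨hderiv, hnonneg, monotoneOn_of_hasDerivWithinAt_nonneg (convex_Icc 0 1)
    (fun y _ => (hderiv y).continuousAt.continuousWithinAt)
    (fun y _ => (hderiv y).hasDerivWithinAt)
    (fun y hy => hnonneg y (interior_subset hy))⟩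

/-- The derivative of `φ_K(x) = ∑_{s=0}^{K−1} (K−s) C(d,s) x^{d−s} (1−x)^s` equals
`∑_{s=0}^{K−1} d C(d−1,s) x^{d−s−1} (1−x)^s`; this is nonnegative on `[0,1]`, so `φ_K`
is nondecreasing on `[0,1]`. -/
theorem stmt17 (K d : ℕ) (hK : 1 ≤ K) (hKd : K ≤ d) :
    (∀ x : ℝ,
      HasDerivAt (fun y : ℝ => ∑ s ∈ Finset.range K,
          ((K : ℝ) - s) * (d.choose s : ℝ) * y ^ (d - s) * (1 - y) ^ s)
        (∑ s ∈ Finset.range K,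
          (d : ℝ) * ((d - 1).choose s : ℝ) * x ^ (d - s - 1) * (1 - x) ^ s) x) ∧
    (∀ x ∈ Set.Icc (0 : ℝ) 1,
      0 ≤ ∑ s ∈ Finset.range K,
          (d : ℝ) * ((d - 1).choose s : ℝ) * x ^ (d - s - 1) * (1 - x) ^ s) ∧
    MonotoneOn (fun y : ℝ => ∑ s ∈ Finset.range K,
        ((K : ℝ) - s) * (d.choose s : ℝ) * y ^ (d - s) * (1 - y) ^ s)
      (Set.Icc (0 : ℝ) 1) :=
  stmt17_general K d
end

section
/- Let 1 ≤ K ≤ d be integers and define φ_K(x) := ∑_{s=0}^{K−1} (K−s) C(d,s) x^{d−s} (1−x)^s. If K < d, then the second derivative of φ_K satisfies φ_K''(x) = d(d−1) C(d−2,K−1) x^{d−K−1} (1−x)^{K−1} for every real x; if K = d, then φ_K(x) = d x for every real x. Consequently φ_K is convex on the interval [0,1]. -/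
/-!
Summation by parts writes `φ_K(x)` as `∑_{j<K} P[Bin(d, x) ≥ d - j]`. The derivative of a
binomial tail telescopes to a single Bernstein term, which gives
`φ_K' = d · P[Bin(d - 1, x) ≥ d - K]`; differentiating once more yields the formula for
`φ_K''`, which is nonnegative on `[0, 1]`. For `K = d` the derivative is the constant `d`,
and `φ_d(0) = 0`.
-/

open Finset

-- `binomTail n k x = P[Bin(n, x) ≥ n - k + 1]`, as the sum over `s < k` failures.
noncomputable def binomTail (n k : ℕ) (x : ℝ) : ℝ :=
  ∑ s ∈ range k, (n.choose s : ℝ) * x ^ (n - s) * (1 - x) ^ s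

noncomputable def jsqPhi (d K : ℕ) (x : ℝ) : ℝ :=
  ∑ s ∈ range K, ((K : ℝ) - s) * (d.choose s : ℝ) * x ^ (d - s) * (1 - x) ^ s

theorem sum_range_sub_mul_eq_sum_sum_range {R : Type*} [CommRing R] (f : ℕ → R) (K : ℕ) :
    ∑ s ∈ range K, ((K : R) - s) * f s = ∑ j ∈ range K, ∑ s ∈ range (j + 1), f s := by
  induction K with
  | zero => simp
  | succ K ih =>
    rw [sum_range_succ (fun j => ∑ s ∈ range (j + 1), f s), ← ih, sum_range_succ f,
      sum_range_succ]
    simp only [Nat.cast_succ, add_sub_right_comm _ (1 : R), add_mul, one_mul, sum_add_distrib,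
      sub_self, zero_mul]
    ring

theorem hasDerivAt_pow_mul_one_sub_pow (a b : ℕ) (x : ℝ) :
    HasDerivAt (fun y : ℝ => y ^ (a + 1) * (1 - y) ^ (b + 1))
      ((a + 1) * x ^ a * (1 - x) ^ (b + 1) - (b + 1) * x ^ (a + 1) * (1 - x) ^ b) x := by
  refine ((hasDerivAt_pow (a + 1) x).mul
    (((hasDerivAt_id x).const_sub 1).pow (b + 1))).congr_deriv ?_
  simp only [Nat.add_sub_cancel, Nat.cast_succ, id, Pi.pow_apply]
  ring

theorem binomTail_succ_self (n : ℕ) (x : ℝ) : binomTail n (n + 1) x = 1 := by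
  have h := add_pow (1 - x) x n
  rw [sub_add_cancel, one_pow] at h
  exact (sum_congr rfl fun s _ => by ring).trans h.symm

theorem hasDerivAt_binomTail_succ {n m : ℕ} (hm : m < n) (x : ℝ) :
    HasDerivAt (binomTail n (m + 1))
      (n * (n - 1).choose m * x ^ (n - 1 - m) * (1 - x) ^ m) x := by
  induction m with
  | zero =>
    have hone : binomTail n 1 = fun y => y ^ n := by ext y; simp [binomTail]
    simpa [hone] using hasDerivAt_pow n x
  | succ m ih =>
    obtain ⟨q, rfl⟩ : ∃ q, n = m + q + 2 := ⟨n - m - 2, by omega⟩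
    have hsplit : binomTail (m + q + 2) (m + 2) = fun y => binomTail (m + q + 2) (m + 1) y +
        ((m + q + 2).choose (m + 1) : ℝ) * (y ^ (q + 1) * (1 - y) ^ (m + 1)) := by
      ext y
      rw [binomTail, sum_range_succ, ← binomTail, show m + q + 2 - (m + 1) = q + 1 by omega,
        mul_assoc]
    have hlower : ((m + q + 2 : ℕ) : ℝ) * (m + q + 1).choose m =
        (m + q + 2).choose (m + 1) * (m + 1 : ℕ) := by
      exact_mod_cast Nat.add_one_mul_choose_eq (m + q + 1) m
    have hupper : ((m + q + 1).choose (m + 1) : ℝ) * (m + q + 2 : ℕ) =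
        (m + q + 2).choose (m + 1) * (q + 1 : ℕ) := by
      have := Nat.choose_mul_succ_eq (m + q + 1) (m + 1)
      rw [show m + q + 1 + 1 - (m + 1) = q + 1 by omega] at this
      exact_mod_cast this
    rw [hsplit]
    refine ((ih (by omega)).add
      ((hasDerivAt_pow_mul_one_sub_pow q m x).const_mul _)).congr_deriv ?_
    rw [show m + q + 2 - 1 - m = q + 1 by omega, show m + q + 2 - 1 - (m + 1) = q by omega,
      show m + q + 2 - 1 = m + q + 1 by omega]
    push_cast at hlower hupper ⊢
    linear_combination -x ^ q * (1 - x) ^ (m + 1) * hupper + x ^ (q + 1) * (1 - x) ^ m * hlower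

theorem jsqPhi_eq_sum_binomTail (d K : ℕ) :
    jsqPhi d K = fun x => ∑ j ∈ range K, binomTail d (j + 1) x := by
  ext x
  simp only [jsqPhi, binomTail]
  rw [← sum_range_sub_mul_eq_sum_sum_range]
  exact sum_congr rfl fun s _ => by ring

theorem hasDerivAt_jsqPhi {d K : ℕ} (hKd : K ≤ d) (x : ℝ) :
    HasDerivAt (jsqPhi d K) (d * binomTail (d - 1) K x) x := by
  rw [jsqPhi_eq_sum_binomTail, binomTail, mul_sum]
  refine (HasDerivAt.fun_sum fun j hj => hasDerivAt_binomTail_succ ?_ x).congr_deriv ?_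
  · grind
  · exact sum_congr rfl fun j _ => by ring

theorem deriv_jsqPhi {d K : ℕ} (hKd : K ≤ d) :
    deriv (jsqPhi d K) = fun x => d * binomTail (d - 1) K x :=
  funext fun x => (hasDerivAt_jsqPhi hKd x).deriv

theorem hasDerivAt_deriv_jsqPhi {d K : ℕ} (hK : 1 ≤ K) (hKd : K < d) (x : ℝ) :
    HasDerivAt (deriv (jsqPhi d K))
      (d * (d - 1) * (d - 2).choose (K - 1) * x ^ (d - K - 1) * (1 - x) ^ (K - 1)) x := by
  obtain ⟨k, rfl⟩ : ∃ k, K = k + 1 := ⟨K - 1, by omega⟩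
  rw [deriv_jsqPhi hKd.le]
  refine ((hasDerivAt_binomTail_succ (n := d - 1) (by omega) x).const_mul
    (d : ℝ)).congr_deriv ?_
  rw [Nat.cast_pred (by omega), show d - 1 - 1 = d - 2 by omega,
    show d - 2 - k = d - (k + 1) - 1 by omega, Nat.add_sub_cancel]
  ring

theorem jsqPhi_self (d : ℕ) (x : ℝ) : jsqPhi d d x = d * x := by
  have hderiv : ∀ y, HasDerivAt (fun y => jsqPhi d d y - d * y) 0 y := by
    intro y
    refine ((hasDerivAt_jsqPhi le_rfl y).sub
      ((hasDerivAt_id y).const_mul (d : ℝ))).congr_deriv ?_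
    cases d with
    | zero => simp
    | succ n => simp [binomTail_succ_self]
  have hzero : jsqPhi d d 0 = 0 :=
    sum_eq_zero fun s hs => by rw [zero_pow (by grind), mul_zero, zero_mul]
  have := is_const_of_deriv_eq_zero (fun y => (hderiv y).differentiableAt)
    (fun y => (hderiv y).deriv) x 0
  simp only [hzero, mul_zero, sub_zero] at this
  linarith

theorem convexOn_jsqPhi {d K : ℕ} (hK : 1 ≤ K) (hKd : K ≤ d) :
    ConvexOn ℝ (Set.Icc 0 1) (jsqPhi d K) := by
  rcases hKd.eq_or_lt with rfl | hlt
  · rw [funext (jsqPhi_self K)]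
    exact (convexOn_id (convex_Icc 0 1)).smul (Nat.cast_nonneg K)
  · refine convexOn_of_deriv2_nonneg' (convex_Icc 0 1)
      (fun x _ => (hasDerivAt_jsqPhi hKd x).differentiableAt.differentiableWithinAt)
      (fun x _ => (hasDerivAt_deriv_jsqPhi hK hlt x).differentiableAt.differentiableWithinAt)
      fun x hx => ?_
    rw [Function.iterate_succ_apply, Function.iterate_one,
      (hasDerivAt_deriv_jsqPhi hK hlt x).deriv]
    have hd : (0 : ℝ) ≤ d - 1 := by
      rw [sub_nonneg]; exact_mod_cast hK.trans hKd
    have hx' : 0 ≤ 1 - x := sub_nonneg.mpr hx.2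
    have hx0 : 0 ≤ x := hx.1
    apply_rules [mul_nonneg, pow_nonneg, Nat.cast_nonneg]

/-- Second derivative of `φ_K(x) = ∑_{s=0}^{K−1} (K−s) C(d,s) x^{d−s} (1−x)^s`:
if `K < d` it equals `d(d−1) C(d−2,K−1) x^{d−K−1} (1−x)^{K−1}`, and if `K = d`
then `φ_K(x) = d x`. Consequently `φ_K` is convex on `[0,1]`. -/
theorem stmt18 (K d : ℕ) (hK : 1 ≤ K) (hKd : K ≤ d) :
    ((K < d) → ∀ x : ℝ,
      deriv (deriv (fun y : ℝ => ∑ s ∈ Finset.range K,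
          ((K : ℝ) - s) * (d.choose s : ℝ) * y ^ (d - s) * (1 - y) ^ s)) x =
        (d : ℝ) * ((d : ℝ) - 1) * ((d - 2).choose (K - 1) : ℝ) *
          x ^ (d - K - 1) * (1 - x) ^ (K - 1)) ∧
    ((K = d) → ∀ x : ℝ,
      (∑ s ∈ Finset.range K,
          ((K : ℝ) - s) * (d.choose s : ℝ) * x ^ (d - s) * (1 - x) ^ s) = (d : ℝ) * x) ∧
    ConvexOn ℝ (Set.Icc (0 : ℝ) 1)
      (fun y : ℝ => ∑ s ∈ Finset.range K,
        ((K : ℝ) - s) * (d.choose s : ℝ) * y ^ (d - s) * (1 - y) ^ s) := by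
  refine ⟨fun hlt x => (hasDerivAt_deriv_jsqPhi hK hlt x).deriv, ?_, convexOn_jsqPhi hK hKd⟩
  rintro rfl x
  exact jsqPhi_self K x
end
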